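/- arXiv:1507.07381 — 7 statements merged into one kernel-verified Lean document; each statement's English description precedes it below -/
import Mathlib

section
/- Let H be a graph with at least one edge and let k be its degeneracy. Then AR(H) ≤ k·e(H) − k + v(H); that is, every proper edge colouring of the complete graph on k·e(H) − k + v(H) vertices yields a rainbow copy of H. -/
open SimpleGraph

/-- A proper edge colouring: edges sharing a vertex receive distinct colours. -/
def IsProperEdgeColoring {V α : Type*} (G : SimpleGraph V) (c : Sym2 V → α) : Prop :=
  ∀ e₁ ∈ G.edgeSet, ∀ e₂ ∈ G.edgeSet, e₁ ≠ e₂ → (∃ v, v ∈ e₁ ∧ v ∈ e₂) → c e₁ ≠ c e₂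

/-- The edge-coloured graph `(G, c)` contains a rainbow copy of `H`. -/
def HasRainbowCopy {V W α : Type*} (G : SimpleGraph V) (c : Sym2 V → α)
    (H : SimpleGraph W) : Prop :=
  ∃ f : W ↪ V, (∀ u v, H.Adj u v → G.Adj (f u) (f v)) ∧
    ∀ u v x y, H.Adj u v → H.Adj x y → s(u, v) ≠ s(x, y) →
      c s(f u, f v) ≠ c s(f x, f y)

/-- Every proper edge colouring of `G` yields a rainbow copy of `H`. -/
def ForcesRainbow {V W : Type*} (G : SimpleGraph V) (H : SimpleGraph W) : Prop :=
  ∀ c : Sym2 V → ℕ, IsProperEdgeColoring G c → HasRainbowCopy G c H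

/-- The maximum degree of `G` is at most `k`. -/
def MaxDegreeLE {V : Type*} (G : SimpleGraph V) (k : ℕ) : Prop :=
  ∀ v, (G.neighborSet v).ncard ≤ k

/-- `k` is the degree anti-Ramsey number of `H`: the smallest `k` for which some
graph with maximum degree at most `k` forces a rainbow copy of `H` under any
proper edge colouring. -/
def DegreeAntiRamsey {W : Type*} (H : SimpleGraph W) (k : ℕ) : Prop :=
  (∃ (n : ℕ) (G : SimpleGraph (Fin n)), MaxDegreeLE G k ∧ ForcesRainbow G H) ∧
  ∀ m : ℕ, (∃ (n : ℕ) (G : SimpleGraph (Fin n)), MaxDegreeLE G m ∧ ForcesRainbow G H) → k ≤ m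

/-- `H` is `d`-degenerate: every non-empty (induced) subgraph has a vertex of
degree at most `d` within it. -/
def DegenLE {V : Type*} (H : SimpleGraph V) (d : ℕ) : Prop :=
  ∀ s : Set V, s.Nonempty → ∃ v ∈ s, (H.neighborSet v ∩ s).ncard ≤ d

/-- `k` is the degeneracy of `H`: the smallest `d` such that `H` is `d`-degenerate. -/
def IsDegeneracy {V : Type*} (H : SimpleGraph V) (k : ℕ) : Prop :=
  DegenLE H k ∧ ∀ d : ℕ, DegenLE H d → k ≤ d

/-!
Order `V` so that every vertex has at most `k` neighbours before it (degeneracy) and embed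
greedily. When placing `v`, the image must avoid the at most `v(H) - 1` vertices used so far,
and for each of the at most `k` earlier neighbours `u` of `v` and each of the at most
`e(H) - 1` edges already embedded, the edge `f u w` must avoid that edge's colour;
properness of the colouring leaves at most one bad `w` per such pair. Hence
`k * e(H) - k + v(H)` vertices always leave room.
-/

open Finset

section ProperColoring

variable {U α : Type*} {c : Sym2 U → α}

theorem IsProperEdgeColoring.top_ne (hc : IsProperEdgeColoring (⊤ : SimpleGraph U) c)
    {a b b' : U} (hab : a ≠ b) (hab' : a ≠ b') (hbb' : b ≠ b') : c s(a, b) ≠ c s(a, b') :=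
  hc _ (by simpa using hab) _ (by simpa using hab') (by simp [hbb', hab.symm])
    ⟨a, Sym2.mem_mk_left a b, Sym2.mem_mk_left a b'⟩

variable [Fintype U] [DecidableEq U] [DecidableEq α]

theorem IsProperEdgeColoring.card_filter_color_eq_le_one
    (hc : IsProperEdgeColoring (⊤ : SimpleGraph U) c) (a : U) (γ : α) :
    #{w | w ≠ a ∧ c s(a, w) = γ} ≤ 1 := by
  refine card_le_one.2 fun w hw w' hw' => ?_
  simp only [mem_filter, mem_univ, true_and] at hw hw'
  by_contra hne
  exact hc.top_ne hw.1.symm hw'.1.symm hne (hw.2.trans hw'.2.symm)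

theorem IsProperEdgeColoring.exists_notMem_forall_color_notMem
    (hc : IsProperEdgeColoring (⊤ : SimpleGraph U) c) {A B : Finset U} (Γ : Finset α)
    (hAB : A ⊆ B) (hcard : #B + #A * #Γ < Fintype.card U) :
    ∃ w ∉ B, ∀ a ∈ A, c s(a, w) ∉ Γ := by
  set bad := A.biUnion fun a => Γ.biUnion fun γ => {w | w ≠ a ∧ c s(a, w) = γ}
  have hbad : #bad ≤ #A * #Γ := by
    refine card_biUnion_le_card_mul _ _ _ fun a _ => ?_
    simpa using card_biUnion_le_card_mul _ _ 1 fun γ _ => hc.card_filter_color_eq_le_one a γ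
  obtain ⟨w, -, hw⟩ := exists_mem_notMem_of_card_lt_card
    ((card_union_le B bad).trans_lt (by rw [card_univ]; omega))
  rw [mem_union, not_or] at hw
  refine ⟨w, hw.1, fun a ha hγ => hw.2 ?_⟩
  simp only [bad, mem_biUnion, mem_filter, mem_univ, true_and]
  exact ⟨a, ha, _, hγ, fun h => hw.1 (h ▸ hAB ha), rfl⟩

end ProperColoring

section Rainbow

variable {V U α : Type*} {H : SimpleGraph V} {c : Sym2 U → α}

theorem DegenLE.exists_card_filter_adj_le [DecidableRel H.Adj] {k : ℕ} (h : DegenLE H k)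
    {s : Finset V} (hs : s.Nonempty) : ∃ v ∈ s, #{u ∈ s | H.Adj v u} ≤ k := by
  obtain ⟨v, hv, hvk⟩ := h s (by simpa using hs)
  refine ⟨v, hv, ?_⟩
  rw [← Set.ncard_coe_finset, coe_filter]
  convert hvk using 2
  ext u
  simp [and_comm]

theorem SimpleGraph.card_edgeFinset_inter_sym2_add_card_filter_adj_le [Fintype V] [DecidableEq V]
    [DecidableRel H.Adj] {t : Finset V} {v : V} (hv : v ∉ t) :
    #(H.edgeFinset ∩ t.sym2) + #{u ∈ t | H.Adj v u} ≤ #H.edgeFinset := by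
  have hdisj : Disjoint (H.edgeFinset ∩ t.sym2) (H.incidenceFinset v) := by
    refine Finset.disjoint_left.2 fun e he hev => hv ?_
    exact mem_sym2_iff.1 (mem_inter.1 he).2 v ((H.mem_incidenceFinset v e).1 hev).2
  calc #(H.edgeFinset ∩ t.sym2) + #{u ∈ t | H.Adj v u}
      ≤ #(H.edgeFinset ∩ t.sym2) + #(H.incidenceFinset v) := by
        rw [card_incidenceFinset_eq_degree, ← card_neighborFinset_eq_degree]
        gcongr
        exact fun u hu => by simpa using (mem_filter.1 hu).2
    _ = #(H.edgeFinset ∩ t.sym2 ∪ H.incidenceFinset v) := (card_union_of_disjoint hdisj).symm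
    _ ≤ #H.edgeFinset := card_le_card (union_subset inter_subset_left (H.incidenceFinset_subset v))

def IsRainbowOn (c : Sym2 U → α) (H : SimpleGraph V) (f : V → U) (s : Finset V) : Prop :=
  Set.InjOn f s ∧ ∀ a ∈ s, ∀ b ∈ s, ∀ p ∈ s, ∀ q ∈ s, H.Adj a b → H.Adj p q →
    s(a, b) ≠ s(p, q) → c s(f a, f b) ≠ c s(f p, f q)

theorem isRainbowOn_empty (f : V → U) : IsRainbowOn c H f ∅ := by
  simp [IsRainbowOn]

theorem SimpleGraph.Adj.update_insert_cases [DecidableEq V] {t : Finset V} {v a b : V}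
    (f : V → U) (w : U) (hv : v ∉ t) (ha : a ∈ insert v t) (hb : b ∈ insert v t)
    (hab : H.Adj a b) :
    (a ∈ t ∧ b ∈ t ∧ s(Function.update f v w a, Function.update f v w b) = s(f a, f b)) ∨
      ∃ u ∈ t, H.Adj v u ∧ s(a, b) = s(v, u) ∧
        s(Function.update f v w a, Function.update f v w b) = s(w, f u) := by
  have hupd : ∀ u ∈ t, Function.update f v w u = f u := fun u hu =>
    Function.update_of_ne (ne_of_mem_of_not_mem hu hv) _ _
  rw [mem_insert] at ha hb
  rcases ha with rfl | ha
  · have hb : b ∈ t := hb.resolve_left hab.ne'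
    exact Or.inr ⟨b, hb, hab, rfl, by rw [Function.update_self, hupd b hb]⟩
  rcases hb with rfl | hb
  · exact Or.inr ⟨a, ha, hab.symm, Sym2.eq_swap,
      by rw [Function.update_self, hupd a ha, Sym2.eq_swap]⟩
  · exact Or.inl ⟨ha, hb, by rw [hupd a ha, hupd b hb]⟩

theorem IsRainbowOn.update_insert [DecidableEq V] [DecidableEq U]
    (hc : IsProperEdgeColoring (⊤ : SimpleGraph U) c) {f : V → U} {t : Finset V} {v : V} {w : U}
    (hf : IsRainbowOn c H f t) (hv : v ∉ t) (hwt : w ∉ t.image f)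
    (hcol : ∀ u ∈ t, H.Adj v u → ∀ p ∈ t, ∀ q ∈ t, H.Adj p q → c s(w, f u) ≠ c s(f p, f q)) :
    IsRainbowOn c H (Function.update f v w) (insert v t) := by
  have hwf : ∀ u ∈ t, w ≠ f u := fun u hu h => hwt (h ▸ mem_image_of_mem f hu)
  constructor
  · rw [coe_insert, Set.injOn_insert (by simpa using hv), Function.update_self]
    refine ⟨hf.1.congr fun u hu => (Function.update_of_ne (ne_of_mem_of_not_mem hu hv) _ _).symm,
      ?_⟩
    rintro ⟨u, hu, h⟩
    rw [Function.update_of_ne (ne_of_mem_of_not_mem hu hv)] at h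
    exact hwf u hu h.symm
  intro a ha b hb p hp q hq hab hpq hne
  rcases hab.update_insert_cases f w hv ha hb with ⟨ha', hb', h₁⟩ | ⟨u₁, hu₁, hvu₁, he₁, h₁⟩ <;>
    rcases hpq.update_insert_cases f w hv hp hq with ⟨hp', hq', h₂⟩ | ⟨u₂, hu₂, hvu₂, he₂, h₂⟩ <;>
    rw [h₁, h₂]
  · exact hf.2 a ha' b hb' p hp' q hq' hab hpq hne
  · exact (hcol u₂ hu₂ hvu₂ a ha' b hb' hab).symm
  · exact hcol u₁ hu₁ hvu₁ p hp' q hq' hpq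
  · have hu : u₁ ≠ u₂ := by
      rintro rfl
      exact hne (he₁.trans he₂.symm)
    exact hc.top_ne (hwf u₁ hu₁) (hwf u₂ hu₂) (hf.1.ne (mem_coe.2 hu₁) (mem_coe.2 hu₂) hu)

theorem exists_isRainbowOn [Fintype V] [DecidableEq V] [DecidableRel H.Adj] [Fintype U]
    [DecidableEq U] [DecidableEq α] {k : ℕ} (hc : IsProperEdgeColoring (⊤ : SimpleGraph U) c)
    (hH : DegenLE H k) (hU : Fintype.card V + k * (#H.edgeFinset - 1) ≤ Fintype.card U)
    (s : Finset V) : ∃ f : V → U, IsRainbowOn c H f s := by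
  induction s using Finset.strongInduction with
  | H s ih =>
  rcases s.eq_empty_or_nonempty with rfl | hs
  · obtain ⟨f⟩ := Function.Embedding.nonempty_of_card_le (α := V) (β := U) (by omega)
    exact ⟨f, isRainbowOn_empty f⟩
  obtain ⟨v, hv, hvk⟩ := hH.exists_card_filter_adj_le hs
  have hvt : v ∉ s.erase v := notMem_erase v s
  obtain ⟨f, hf⟩ := ih (s.erase v) (erase_ssubset hv)
  set N := {u ∈ s.erase v | H.Adj v u}
  set Es := H.edgeFinset ∩ (s.erase v).sym2
  have hN : #N ≤ k := (card_le_card (filter_subset_filter _ (erase_subset v s))).trans hvk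
  have hNEs : #N * #Es ≤ k * (#H.edgeFinset - 1) := by
    have hEN : #Es + #N ≤ #H.edgeFinset := H.card_edgeFinset_inter_sym2_add_card_filter_adj_le hvt
    rcases N.eq_empty_or_nonempty with hN0 | hN0
    · simp [hN0]
    · exact Nat.mul_le_mul hN (by have := hN0.card_pos; omega)
  have hcard : #((s.erase v).image f) + #(N.image f) * #(Es.image fun e => c (e.map f)) <
      Fintype.card U := by
    have := card_lt_univ_of_notMem hvt
    have := card_image_le (s := s.erase v) (f := f)
    have := Nat.mul_le_mul (card_image_le (s := N) (f := f))
      (card_image_le (s := Es) (f := fun e => c (e.map f)))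
    omega
  obtain ⟨w, hwt, hwN⟩ := hc.exists_notMem_forall_color_notMem _
    (image_subset_image (filter_subset _ _)) hcard
  refine ⟨Function.update f v w, insert_erase hv ▸ hf.update_insert hc hvt hwt ?_⟩
  intro u hu hvu p hp q hq hpq hcol
  refine hwN (f u) (mem_image_of_mem f (mem_filter.2 ⟨hu, hvu⟩)) ?_
  rw [Sym2.eq_swap, hcol]
  exact mem_image_of_mem _ (mem_inter.2 ⟨H.mem_edgeFinset.2 hpq, mk_mem_sym2_iff.2 ⟨hp, hq⟩⟩)

theorem forcesRainbow_top_of_degenLE [Fintype V] [DecidableEq V] [DecidableRel H.Adj]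
    [Fintype U] [DecidableEq U] {k : ℕ} (hH : DegenLE H k)
    (hU : Fintype.card V + k * (#H.edgeFinset - 1) ≤ Fintype.card U) :
    ForcesRainbow (⊤ : SimpleGraph U) H := by
  intro c hc
  obtain ⟨f, hinj, hf⟩ := exists_isRainbowOn hc hH hU univ
  rw [coe_univ, Set.injOn_univ] at hinj
  exact ⟨⟨f, hinj⟩, fun u v huv => hinj.ne huv.ne,
    fun a b p q => hf a (mem_univ a) b (mem_univ b) p (mem_univ p) q (mem_univ q)⟩

end Rainbow

theorem stmt_0_general {V : Type} [Fintype V] (H : SimpleGraph V)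
    (k : ℕ) (hk : IsDegeneracy H k) :
    ForcesRainbow
      (⊤ : SimpleGraph (Fin (k * H.edgeSet.ncard - k + Fintype.card V))) H := by
  classical
  refine forcesRainbow_top_of_degenLE hk.1 ?_
  rw [Fintype.card_fin, ← coe_edgeFinset, Set.ncard_coe_finset, ← Nat.mul_sub_one, add_comm]

theorem stmt_0 {V : Type} [Fintype V] (H : SimpleGraph V) (hE : H.edgeSet.Nonempty)
    (k : ℕ) (hk : IsDegeneracy H k) :
    ForcesRainbow
      (⊤ : SimpleGraph (Fin (k * H.edgeSet.ncard - k + Fintype.card V))) H :=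
  stmt_0_general H k hk
end

section
/- Let k ≥ 2 be an integer, let T be a tree on k+2 vertices which is not a star, and let G be a k-regular connected graph with girth at least k+2. If there exists a proper edge colouring of G with no rainbow copy of T, then G is k-edge-colourable (i.e., the chromatic index of G equals k). -/
open SimpleGraph

/-- All edges of `F` share a common vertex. -/
def IsStar {V : Type*} (F : SimpleGraph V) : Prop :=
  ∃ v, ∀ e ∈ F.edgeSet, v ∈ e

/-!
Let `c` be a proper colouring without a rainbow `T`, and suppose a colour `α` appears at `u`,
on an edge `uu'`, but not at a neighbour `v` of `u`. Since `T` is not a star, it has a leaf `ℓ`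
whose neighbour `p` starts a path `p q r` avoiding `ℓ`. Map `p q r` to `v u u'` and embed the rest
of `T - ℓ` greedily: a new vertex takes a colour at its parent's image that is not used yet, which
exists because fewer than `k` colours are in use while fewer than `k + 1` vertices are placed, and
its image is a new vertex because `G` has girth at least `k + 2`. Finally `ℓ` is attached at `v`.
The `k` colours used by then include `α`, which is missing at `v`, so `v` still has a free
colour, and we get a rainbow `T`. Hence adjacent vertices see the same colours, and since `G` is
connected, all edges are coloured from a single set of `k` colours.
-/

variable {V W κ : Type*}

section Palette

variable {G : SimpleGraph V} {c : Sym2 V → κ}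

def palette (G : SimpleGraph V) (c : Sym2 V → κ) (v : V) : Set κ :=
  c '' G.incidenceSet v

lemma mem_palette {v : V} {γ : κ} : γ ∈ palette G c v ↔ ∃ w, G.Adj v w ∧ c s(v, w) = γ := by
  constructor
  · rintro ⟨e, ⟨he, hve⟩, rfl⟩
    obtain ⟨w, rfl⟩ := Sym2.mem_iff_exists.mp hve
    exact ⟨w, he, rfl⟩
  · rintro ⟨w, hvw, rfl⟩
    exact ⟨s(v, w), ⟨hvw, Sym2.mem_mk_left v w⟩, rfl⟩

lemma IsProperEdgeColoring.injOn_incidenceSet (hc : IsProperEdgeColoring G c) (v : V) :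
    Set.InjOn c (G.incidenceSet v) := fun e₁ he₁ e₂ he₂ hce => by
  by_contra hne
  exact hc e₁ he₁.1 e₂ he₂.1 hne ⟨v, he₁.2, he₂.2⟩ hce

lemma IsProperEdgeColoring.ncard_palette (hc : IsProperEdgeColoring G c) (v : V) :
    (palette G c v).ncard = (G.neighborSet v).ncard := by
  classical
  rw [palette, (hc.injOn_incidenceSet v).ncard_image,
    Set.ncard_congr' (G.incidenceSetEquivNeighborSet v)]

lemma palette_eq_of_reachable (h : ∀ u v, G.Adj u v → palette G c u ⊆ palette G c v)
    {u v : V} (huv : G.Reachable u v) : palette G c u = palette G c v := by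
  obtain ⟨w⟩ := huv
  induction w with
  | nil => rfl
  | cons hadj _ ih => exact ((h _ _ hadj).antisymm (h _ _ hadj.symm)).trans ih

lemma IsProperEdgeColoring.exists_fin_of_forall_mem {k : ℕ} (hc : IsProperEdgeColoring G c)
    (hk : 0 < k) {P : Set κ} (hP : P.ncard = k) (hcP : ∀ e ∈ G.edgeSet, c e ∈ P) :
    ∃ c' : Sym2 V → Fin k, IsProperEdgeColoring G c' := by
  classical
  have : Finite P := Set.finite_of_ncard_pos (hP ▸ hk)
  let φ : P ≃ Fin k := Finite.equivFinOfCardEq (by rwa [Nat.card_coe_set_eq])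
  refine ⟨fun e => if h : c e ∈ P then φ ⟨c e, h⟩ else ⟨0, hk⟩, ?_⟩
  intro e₁ he₁ e₂ he₂ hne hshare hce
  simp only [dif_pos (hcP e₁ he₁), dif_pos (hcP e₂ he₂), φ.apply_eq_iff_eq, Subtype.mk.injEq] at hce
  exact hc e₁ he₁ e₂ he₂ hne hshare hce

end Palette

namespace SimpleGraph

variable {T : SimpleGraph V}

lemma exists_adj_of_preconnected_induce {S R : Set V} (hR : (T.induce R).Preconnected)
    (hSR : S ⊆ R) {a b : V} (ha : a ∈ S) (hb : b ∈ R \ S) : ∃ p ∈ S, ∃ t ∈ R \ S, T.Adj p t := by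
  obtain ⟨w⟩ := hR ⟨a, hSR ha⟩ ⟨b, hb.1⟩
  obtain ⟨d, -, hd₁, hd₂⟩ := w.exists_boundary_dart {x | x.1 ∈ S} ha hb.2
  exact ⟨d.fst, hd₁, d.snd, ⟨d.snd.2, hd₂⟩, d.adj⟩

lemma IsAcyclic.eq_of_adj_of_preconnected_induce (hT : T.IsAcyclic) {S : Set V}
    (hS : (T.induce S).Preconnected) {t a b : V} (ht : t ∉ S) (ha : a ∈ S) (hb : b ∈ S)
    (hta : T.Adj t a) (htb : T.Adj t b) : a = b := by
  obtain ⟨w, hw⟩ := (hS ⟨a, ha⟩ ⟨b, hb⟩).exists_isPath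
  let q := w.map (Embedding.induce (G := T) S).toHom
  have hq : q.IsPath := hw.map (Embedding.induce (G := T) S).injective
  have htq : t ∉ q.support := by
    simp only [q, Walk.support_map, List.mem_map, not_exists, not_and]
    exact fun x _ hx => ht (hx ▸ x.2)
  have hb' := hT.mem_support_of_ne_mem_support_of_adj_of_isPath
    (Path.singleton hta.symm).2 hq htb htq
  simp only [Path.singleton, Walk.support_cons, Walk.support_nil, List.mem_cons,
    List.not_mem_nil, or_false] at hb'
  rcases hb' with rfl | rfl
  · rfl
  · exact absurd hb ht

lemma IsTree.exists_leaf_adj_adj_adj_of_not_isStar [Fintype V] [DecidableRel T.Adj]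
    (hT : T.IsTree) (hstar : ¬ IsStar T) : ∃ ℓ p q r, T.degree ℓ = 1 ∧ T.Adj ℓ p ∧ T.Adj p q ∧
      T.Adj q r ∧ q ≠ ℓ ∧ r ≠ ℓ ∧ r ≠ p := by
  obtain ⟨v₀⟩ := hT.connected.nonempty
  have : Nontrivial V := by
    by_contra hV
    rw [not_nontrivial_iff_subsingleton] at hV
    refine hstar ⟨v₀, fun e he => ?_⟩
    induction e with
    | h x y => exact absurd (Subsingleton.elim x y) (T.ne_of_adj he)
  obtain ⟨ℓ, hℓ⟩ := hT.exists_vert_degree_one_of_nontrivial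
  obtain ⟨p, hℓp, hp⟩ := degree_eq_one_iff_existsUnique_adj.mp hℓ
  suffices ∃ q r, T.Adj p q ∧ T.Adj q r ∧ q ≠ ℓ ∧ r ≠ p by
    obtain ⟨q, r, hpq, hqr, hqℓ, hrp⟩ := this
    refine ⟨ℓ, p, q, r, hℓ, hℓp, hpq, hqr, hqℓ, ?_, hrp⟩
    rintro rfl
    exact hpq.ne (hp q hqr.symm).symm
  by_contra! H
  have hnbr : ∀ z, T.Adj p z → ∀ y, T.Adj z y → y = p := by
    intro z hz y hy
    obtain rfl | hzℓ := eq_or_ne z ℓ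
    · exact hp y hy
    · exact H z y hz hy hzℓ
  have hnear : ∀ z, z = p ∨ T.Adj p z := fun z => by
    induction (reachable_iff_reflTransGen p z).mp (hT.connected.preconnected p z) with
    | refl => exact Or.inl rfl
    | tail _ hyz ih =>
      rcases ih with rfl | hpy
      · exact Or.inr hyz
      · exact Or.inl (hnbr _ hpy _ hyz)
  refine hstar ⟨p, fun e he => ?_⟩
  induction e with
  | h x y =>
    rcases hnear x with rfl | hpx
    · exact Sym2.mem_mk_left _ _
    · exact hnbr x hpx y he ▸ Sym2.mem_mk_right _ _

lemma IsAcyclic.edgeSet_inter_sym2_insert (hT : T.IsAcyclic) {S : Set V}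
    (hS : (T.induce S).Preconnected) {t p : V} (ht : t ∉ S) (hp : p ∈ S)
    (hpt : T.Adj p t) : T.edgeSet ∩ (insert t S).sym2 = insert s(p, t) (T.edgeSet ∩ S.sym2) := by
  have huniq : ∀ b ∈ S, T.Adj t b → b = p := fun b hb htb =>
    hT.eq_of_adj_of_preconnected_induce hS ht hb hp htb hpt.symm
  ext e
  induction e with
  | h a b =>
    simp only [Set.mem_inter_iff, mem_edgeSet, Set.mk_mem_sym2_iff, Set.mem_insert_iff,
      Sym2.eq_iff]
    constructor
    · rintro ⟨hab, rfl | ha, rfl | hb⟩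
      · exact absurd hab (T.irrefl)
      · exact Or.inl (Or.inr ⟨rfl, huniq b hb hab⟩)
      · exact Or.inl (Or.inl ⟨huniq a ha hab.symm, rfl⟩)
      · exact Or.inr ⟨hab, ha, hb⟩
    · rintro ((⟨rfl, rfl⟩ | ⟨rfl, rfl⟩) | ⟨hab, ha, hb⟩)
      · exact ⟨hpt, Or.inr hp, Or.inl rfl⟩
      · exact ⟨hpt.symm, Or.inl rfl, Or.inr hp⟩
      · exact ⟨hab, Or.inr ha, Or.inr hb⟩

end SimpleGraph

/-- `U` is a budget of colours: it contains every colour used on the image of `T[S]`, and is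
smaller than `S`. -/
structure IsRainbowPartialEmbedding (T : SimpleGraph V) (G : SimpleGraph W) (c : Sym2 W → κ)
    (S : Set V) (f : V → W) (U : Finset κ) : Prop where
  injOn : Set.InjOn f S
  map_mem_edgeSet : ∀ e ∈ T.edgeSet ∩ S.sym2, e.map f ∈ G.edgeSet
  injOn_colour : Set.InjOn (fun e => c (e.map f)) (T.edgeSet ∩ S.sym2)
  colour_mem : ∀ e ∈ T.edgeSet ∩ S.sym2, c (e.map f) ∈ U
  card_lt : U.card < S.ncard
  preconnected : (T.induce S).Preconnected

namespace IsRainbowPartialEmbedding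

variable {T : SimpleGraph V} {G : SimpleGraph W} {c : Sym2 W → κ} {S : Set V} {f : V → W}
  {U : Finset κ}

lemma finite (hI : IsRainbowPartialEmbedding T G c S f U) : S.Finite :=
  Set.finite_of_ncard_pos (Nat.zero_lt_of_lt hI.card_lt)

lemma singleton (a : V) (f : V → W) : IsRainbowPartialEmbedding T G c {a} f ∅ :=
  ⟨Set.injOn_singleton f a, by simp, by simp, by simp, by simp, Preconnected.of_subsingleton⟩

lemma exists_isPath (hI : IsRainbowPartialEmbedding T G c S f U) {a b : V} (ha : a ∈ S)
    (hb : b ∈ S) : ∃ Q : G.Walk (f a) (f b), Q.IsPath ∧ Q.length < S.ncard ∧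
      ∀ e ∈ Q.edges, c e ∈ U := by
  let φ : T.induce S →g G :=
    ⟨fun x => f x, fun {x y} hxy => hI.map_mem_edgeSet s(x.1, y.1) ⟨hxy, x.2, y.2⟩⟩
  have hφ : Function.Injective φ := fun x y hxy => Subtype.ext (hI.injOn x.2 y.2 hxy)
  obtain ⟨w, hw⟩ := (hI.preconnected ⟨a, ha⟩ ⟨b, hb⟩).exists_isPath
  have := hI.finite.fintype
  refine ⟨w.map φ, hw.map hφ, ?_, ?_⟩
  · rw [Walk.length_map, ← Nat.card_coe_set_eq, Nat.card_eq_fintype_card]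
    exact hw.length_lt
  · intro e he
    rw [Walk.edges_map, List.mem_map] at he
    obtain ⟨e', he', rfl⟩ := he
    induction e' with
    | h x y => exact hI.colour_mem s(x.1, y.1) ⟨w.adj_of_mem_edges he', x.2, y.2⟩

/-- An edge at `f p` whose colour lies outside the budget cannot lead back into `f '' S`:
together with a path inside the image it would close a cycle of length at most `|S|`. -/
lemma notMem_image (hI : IsRainbowPartialEmbedding T G c S f U)
    (hgirth : (S.ncard : ℕ∞) < G.egirth) {p : V} {x : W} (hp : p ∈ S) (hx : G.Adj (f p) x)
    (hxU : c s(f p, x) ∉ U) : x ∉ f '' S := by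
  rintro ⟨s, hs, rfl⟩
  obtain ⟨Q, hQ, hlen, hcol⟩ := hI.exists_isPath hp hs
  have hcyc : (Walk.cons hx.symm Q).IsCycle :=
    (Walk.cons_isCycle_iff Q hx.symm).mpr ⟨hQ, fun he => hxU (Sym2.eq_swap ▸ hcol _ he)⟩
  have := hgirth.trans_le (egirth_le_length hcyc)
  rw [Walk.length_cons] at this
  norm_cast at this
  omega

lemma insert [DecidableEq V] [DecidableEq κ] (hI : IsRainbowPartialEmbedding T G c S f U)
    (hT : T.IsAcyclic) (hgirth : (S.ncard : ℕ∞) < G.egirth) {t p : V} {x : W} (ht : t ∉ S)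
    (hp : p ∈ S) (hpt : T.Adj p t) (hx : G.Adj (f p) x) (hxU : c s(f p, x) ∉ U) :
    IsRainbowPartialEmbedding T G c (insert t S) (Function.update f t x)
      (insert (c s(f p, x)) U) := by
  set f' := Function.update f t x
  have hf' : Set.EqOn f' f S := fun a ha => Function.update_of_ne (ne_of_mem_of_not_mem ha ht) x f
  have hmap : ∀ e ∈ T.edgeSet ∩ S.sym2, e.map f' = e.map f := fun e he =>
    Sym2.map_congr fun a ha => hf' (Set.mem_sym2_iff_subset.mp he.2 ha)
  have hnew : s(p, t).map f' = s(f p, x) := by simp [f', hpt.ne]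
  have hold : s(p, t) ∉ T.edgeSet ∩ S.sym2 := fun h => ht (Set.mk_mem_sym2_iff.mp h.2).2
  have hedges := hT.edgeSet_inter_sym2_insert hI.preconnected ht hp hpt
  refine ⟨?_, ?_, ?_, ?_, ?_, ?_⟩
  · rw [Set.injOn_insert ht, hf'.image_eq, show f' t = x from Function.update_self t x f]
    exact ⟨hI.injOn.congr hf'.symm, hI.notMem_image hgirth hp hx hxU⟩
  · rw [hedges]
    rintro e (rfl | he)
    · rw [hnew]
      exact hx
    · rw [hmap e he]
      exact hI.map_mem_edgeSet e he
  · rw [hedges, Set.injOn_insert hold]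
    refine ⟨hI.injOn_colour.congr fun e he => by simp only [hmap e he], ?_⟩
    rintro ⟨e, he, hce⟩
    simp only [hmap e he, hnew] at hce
    exact hxU (hce ▸ hI.colour_mem e he)
  · rw [hedges]
    rintro e (rfl | he)
    · rw [hnew]
      exact Finset.mem_insert_self _ _
    · rw [hmap e he]
      exact Finset.mem_insert_of_mem (hI.colour_mem e he)
  · rw [Set.ncard_insert_of_notMem ht hI.finite]
    exact (Finset.card_insert_le _ _).trans_lt (Nat.succ_lt_succ hI.card_lt)
  · have := connected_induce_union hI.preconnected
      (Preconnected.of_subsingleton (V := ({t} : Set V))) hp (Set.mem_singleton t) hpt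
    rw [Set.union_singleton] at this
    exact this.preconnected

lemma exists_extension [DecidableEq V] [DecidableEq κ]
    (hI : IsRainbowPartialEmbedding T G c S f U) (hT : T.IsAcyclic)
    {R : Set V} (hR : (T.induce R).Preconnected) (hRfin : R.Finite) (hSR : S ⊆ R)
    (hgirth : (R.ncard : ℕ∞) ≤ G.egirth) (hpal : ∀ w, R.ncard ≤ (palette G c w).ncard + 1) :
    ∃ f' U', IsRainbowPartialEmbedding T G c R f' U' ∧ Set.EqOn f' f S ∧ U ⊆ U' := by
  induction hn : R.ncard - S.ncard generalizing S f U with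
  | zero =>
    obtain rfl : S = R := Set.eq_of_subset_of_ncard_le hSR (by omega) hRfin
    exact ⟨f, U, hI, Set.eqOn_refl f S, subset_rfl⟩
  | succ n ih =>
    have hSR' : S.ncard < R.ncard := by omega
    obtain ⟨b, hbR, hbS⟩ := Set.exists_of_ssubset (hSR.ssubset_of_ne (by rintro rfl; omega))
    obtain ⟨a, ha⟩ := Set.nonempty_of_ncard_ne_zero (Nat.ne_zero_of_lt hI.card_lt)
    obtain ⟨p, hp, t, ⟨htR, htS⟩, hpt⟩ := exists_adj_of_preconnected_induce hR hSR ha ⟨hbR, hbS⟩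
    obtain ⟨γ, hγ, hγU⟩ := Set.exists_mem_notMem_of_ncard_lt_ncard (s := (U : Set κ))
      (t := palette G c (f p)) (by
        have := hpal (f p)
        have := hI.card_lt
        rw [Set.ncard_coe_finset]
        omega)
    obtain ⟨x, hx, rfl⟩ := mem_palette.mp hγ
    have hI' := hI.insert hT (lt_of_lt_of_le (by exact_mod_cast hSR') hgirth) htS hp hpt hx hγU
    obtain ⟨f', U', hI'', hf', hU'⟩ := ih hI' (Set.insert_subset htR hSR)
      (by rw [Set.ncard_insert_of_notMem htS hI.finite]; omega)
    refine ⟨f', U', hI'', fun a ha => ?_, (Finset.subset_insert _ _).trans hU'⟩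
    rw [hf' (Set.mem_insert_of_mem _ ha), Function.update_of_ne (ne_of_mem_of_not_mem ha htS)]

lemma exists_of_adj_adj [DecidableEq V] [DecidableEq κ] (hT : T.IsAcyclic) {p q r : V}
    (hpq : T.Adj p q) (hqr : T.Adj q r) (hrp : r ≠ p) {v u u' : W} (hvu : G.Adj v u)
    (huu' : G.Adj u u') (hc : c s(v, u) ≠ c s(u, u')) :
    ∃ f U, IsRainbowPartialEmbedding T G c {r, q, p} f U ∧ f p = v ∧ c s(u, u') ∈ U := by
  have h₁ := singleton (T := T) (G := G) (c := c) p fun _ => v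
  have h3 : (3 : ℕ∞) ≤ G.egirth := three_le_egirth
  have h₂ := h₁.insert hT (by rw [Set.ncard_singleton]; exact lt_of_lt_of_le (by norm_num) h3)
    (Set.mem_singleton_iff.not.mpr hpq.ne') rfl hpq hvu (Finset.notMem_empty _)
  have h₃ := h₂.insert hT (x := u')
    (by rw [Set.ncard_pair hpq.ne']; exact lt_of_lt_of_le (by norm_num) h3)
    (by simp [hqr.ne', hrp]) (Set.mem_insert q _) hqr (by simpa using huu')
    (by simpa using hc.symm)
  refine ⟨_, _, h₃, ?_, by simp⟩
  simp [hrp.symm, hpq.ne]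

lemma hasRainbowCopy (hI : IsRainbowPartialEmbedding T G c Set.univ f U) :
    HasRainbowCopy G c T := by
  have hedge : ∀ {u v}, T.Adj u v → s(u, v) ∈ T.edgeSet ∩ (Set.univ : Set V).sym2 :=
    fun h => ⟨h, by simp⟩
  exact ⟨⟨f, Set.injOn_univ.mp hI.injOn⟩, fun u v huv => hI.map_mem_edgeSet _ (hedge huv),
    fun u v x y huv hxy hne hc => hne (hI.injOn_colour (hedge huv) (hedge hxy) hc)⟩

end IsRainbowPartialEmbedding

theorem palette_subset_palette_of_not_hasRainbowCopy [Fintype V] {T : SimpleGraph V}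
    {G : SimpleGraph W} {c : Sym2 W → κ} {k : ℕ} (hT : T.IsTree)
    (hTcard : Fintype.card V = k + 2) (hTstar : ¬ IsStar T) (hc : IsProperEdgeColoring G c)
    (hdeg : ∀ w, (G.neighborSet w).ncard = k) (hgirth : ((k + 2 : ℕ) : ℕ∞) ≤ G.egirth)
    (hno : ¬ HasRainbowCopy G c T) {u v : W} (huv : G.Adj u v) :
    palette G c u ⊆ palette G c v := by
  classical
  intro α hα
  by_contra hαv
  obtain ⟨u', huu', rfl⟩ := mem_palette.mp hα
  obtain ⟨ℓ, p, q, r, hℓ, hℓp, hpq, hqr, hqℓ, hrℓ, hrp⟩ :=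
    hT.exists_leaf_adj_adj_adj_of_not_isStar hTstar
  have hβα : c s(v, u) ≠ c s(u, u') := fun h => hαv (h ▸ mem_palette.mpr ⟨u, huv.symm, rfl⟩)
  obtain ⟨f, U, hI, hfp, hαU⟩ :=
    IsRainbowPartialEmbedding.exists_of_adj_adj hT.isAcyclic hpq hqr hrp huv.symm huu' hβα
  have hRcard : ({ℓ}ᶜ : Set V).ncard = k + 1 := by
    have := Set.ncard_add_ncard_compl {ℓ}
    rw [Set.ncard_singleton, Nat.card_eq_fintype_card, hTcard] at this
    omega
  obtain ⟨f', U', hI', hf', hUU'⟩ := hI.exists_extension hT.isAcyclic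
    (hT.connected.induce_compl_singleton_of_degree_eq_one hℓ).preconnected (Set.toFinite _)
    (by simp [hrℓ.symm, hqℓ.symm, hℓp.ne])
    (by rw [hRcard]; exact le_trans (by norm_cast; omega) hgirth)
    (fun w => by rw [hRcard, hc.ncard_palette, hdeg])
  have hf'p : f' p = v := (hf' (by simp)).trans hfp
  -- `U'` may have `k` colours, but one of them, `c s(u, u')`, is missing at `v`
  obtain ⟨γ, hγ, hγU⟩ := Set.exists_mem_notMem_of_ncard_lt_ncard
    (s := ((U'.erase (c s(u, u')) : Finset κ) : Set κ)) (t := palette G c v) (by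
      have := hI'.card_lt
      have := Finset.card_pos.mpr ⟨_, hUU' hαU⟩
      rw [Set.ncard_coe_finset, Finset.card_erase_of_mem (hUU' hαU), hc.ncard_palette, hdeg]
      omega)
  have hγU' : γ ∉ U' := fun h => hγU (Finset.mem_erase.mpr ⟨ne_of_mem_of_not_mem hγ hαv, h⟩)
  obtain ⟨x, hvx, rfl⟩ := mem_palette.mp hγ
  have hI'' := hI'.insert hT.isAcyclic (x := x)
    (by rw [hRcard]; exact lt_of_lt_of_le (by norm_cast; omega) hgirth)
    (by simp : ℓ ∉ ({ℓ}ᶜ : Set V)) (by simp [hℓp.ne']) hℓp.symm (hf'p ▸ hvx) (hf'p ▸ hγU')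
  rw [Set.insert_eq, Set.union_compl_self] at hI''
  exact hno hI''.hasRainbowCopy

theorem stmt_4_general {VT VG : Type} [Fintype VT] (k : ℕ) (hk : 2 ≤ k)
    (T : SimpleGraph VT) (hT : T.IsTree) (hTcard : Fintype.card VT = k + 2)
    (hTstar : ¬ IsStar T)
    (G : SimpleGraph VG) (hreg : ∀ v, (G.neighborSet v).ncard = k)
    (hconn : G.Connected) (hgirth : ((k + 2 : ℕ) : ℕ∞) ≤ G.egirth)
    (h : ∃ c : Sym2 VG → ℕ, IsProperEdgeColoring G c ∧ ¬ HasRainbowCopy G c T) :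
    ∃ c : Sym2 VG → Fin k, IsProperEdgeColoring G c := by
  obtain ⟨c, hc, hno⟩ := h
  have hsub : ∀ u v, G.Adj u v → palette G c u ⊆ palette G c v := fun _ _ huv =>
    palette_subset_palette_of_not_hasRainbowCopy hT hTcard hTstar hc hreg hgirth hno huv
  obtain ⟨v₀⟩ := hconn.nonempty
  refine hc.exists_fin_of_forall_mem (by omega) ((hc.ncard_palette v₀).trans (hreg v₀))
    fun e he => ?_
  induction e with
  | h a b =>
    rw [← palette_eq_of_reachable hsub (hconn.preconnected a v₀)]
    exact mem_palette.mpr ⟨b, he, rfl⟩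

theorem stmt_4 {VT VG : Type} [Fintype VT] [Fintype VG] (k : ℕ) (hk : 2 ≤ k)
    (T : SimpleGraph VT) (hT : T.IsTree) (hTcard : Fintype.card VT = k + 2)
    (hTstar : ¬ IsStar T)
    (G : SimpleGraph VG) (hreg : ∀ v, (G.neighborSet v).ncard = k)
    (hconn : G.Connected) (hgirth : ((k + 2 : ℕ) : ℕ∞) ≤ G.egirth)
    (h : ∃ c : Sym2 VG → ℕ, IsProperEdgeColoring G c ∧ ¬ HasRainbowCopy G c T) :
    ∃ c : Sym2 VG → Fin k, IsProperEdgeColoring G c :=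
  stmt_4_general k hk T hT hTcard hTstar G hreg hconn hgirth h
end

section
/- Let k be a positive integer and let G be a k-regular connected graph. If G has a cut-vertex, then G is not k-edge-colourable. -/
/-!
A colour class of a proper `k`-edge-colouring of a `k`-regular graph is a perfect matching,
i.e. a fixed-point-free involution `f` with `v ~ f v` for all `v`. Let `S` be a component of
`G - x`; since `G` is connected, `x` has a neighbour `y₁ ∈ S` and a neighbour `y₂` in another
component. The matching of colour `c(x y₂)` maps `S` into itself, so `|S|` is even, while the
matching of colour `c(x y₁)` maps `S ∪ {x}` into itself, so `|S|` is odd.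
-/

open SimpleGraph

theorem Function.Involutive.even_ncard_of_mapsTo {α : Type*} [Finite α] {f : α → α}
    (hf : Function.Involutive f) {s : Set α} (hs : Set.MapsTo f s s) (hfix : ∀ a ∈ s, f a ≠ a) :
    Even s.ncard := by
  classical
  have := Fintype.ofFinite α
  rw [Set.ncard_eq_toFinset_card', ← ZMod.natCast_eq_zero_iff_even, Finset.card_eq_sum_ones,
    Nat.cast_sum]
  refine Finset.sum_involution (fun a _ => f a) (fun _ _ => by decide) (fun a ha _ => ?_)
    (fun a ha => ?_) (fun a _ => hf a)
  · exact hfix a (Set.mem_toFinset.1 ha)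
  · exact Set.mem_toFinset.2 (hs (Set.mem_toFinset.1 ha))

namespace SimpleGraph

variable {V : Type*} {G : SimpleGraph V} {x : V} {S : Set V}

theorem compl_insert_neighborSet_subset (hS : ∀ u ∈ S, G.neighborSet u ⊆ insert x S) :
    ∀ u ∈ (insert x S)ᶜ, G.neighborSet u ⊆ insert x (insert x S)ᶜ := by
  intro u hu w hw
  by_cases hwS : w ∈ S
  · exact absurd (hS w hwS (G.adj_symm hw)) hu
  · simp only [Set.mem_insert_iff, Set.mem_compl_iff]
    tauto

theorem Connected.exists_adj_mem (hG : G.Connected) (hxS : x ∉ S)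
    (hS : ∀ u ∈ S, G.neighborSet u ⊆ insert x S) (hne : S.Nonempty) : ∃ y ∈ S, G.Adj x y := by
  obtain ⟨u, hu⟩ := hne
  obtain ⟨d, -, hd₁, hd₂⟩ := (hG.preconnected u x).some.exists_boundary_dart S hu hxS
  have hdx : d.snd = x := by simpa [hd₂] using hS _ hd₁ d.adj
  exact ⟨d.fst, hd₁, hdx ▸ d.adj.symm⟩

theorem exists_separation_of_not_connected_induce {a : V} (hx : ¬ (G.induce {x}ᶜ).Connected)
    (hax : a ≠ x) :
    ∃ S : Set V, x ∉ S ∧ (∀ u ∈ S, G.neighborSet u ⊆ insert x S) ∧ S.Nonempty ∧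
      (insert x S)ᶜ.Nonempty := by
  have hpre : ¬ (G.induce {x}ᶜ).Preconnected := fun h => hx (connected_iff _ |>.2 ⟨h, ⟨a, hax⟩⟩)
  obtain ⟨A, B, hAB⟩ : ∃ A B, ¬ (G.induce {x}ᶜ).Reachable A B := by
    simpa [Preconnected] using hpre
  refine ⟨{v | ∃ h : v ≠ x, (G.induce {x}ᶜ).Reachable A ⟨v, h⟩}, fun ⟨h, _⟩ => h rfl, ?_,
    ⟨A, A.2, .rfl⟩, ⟨B, ?_⟩⟩
  · rintro u ⟨hu, hAu⟩ w huw
    by_cases hw : w = x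
    · exact Or.inl hw
    · exact Or.inr ⟨hw, hAu.trans (Adj.reachable (by simpa using huw))⟩
  · rintro (hB | ⟨_, hAB'⟩)
    · exact B.2 hB
    · exact hAB hAB'

theorem even_ncard_iff_of_involutive_adj [Finite V] {f : V → V} (hf : Function.Involutive f)
    (hadj : ∀ v, G.Adj v (f v)) (hxS : x ∉ S) (hS : ∀ u ∈ S, G.neighborSet u ⊆ insert x S) :
    Even S.ncard ↔ f x ∉ S := by
  have hfix : ∀ v, f v ≠ v := fun v => (hadj v).ne'
  by_cases hfx : f x ∈ S
  · have hmaps : Set.MapsTo f (insert x S) (insert x S) := by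
      rintro v (rfl | hv)
      exacts [Set.mem_insert_of_mem _ hfx, hS v hv (hadj v)]
    have heven := hf.even_ncard_of_mapsTo hmaps fun v _ => hfix v
    rw [Set.ncard_insert_of_notMem hxS, Nat.even_add_one] at heven
    exact iff_of_false heven (not_not.2 hfx)
  · refine iff_of_true (hf.even_ncard_of_mapsTo (fun v hv => ?_) fun v _ => hfix v) hfx
    rcases hS v hv (hadj v) with hvx | hfv
    · exact absurd (by rwa [← hvx, hf v]) hfx
    · exact hfv

end SimpleGraph

namespace IsProperEdgeColoring

open SimpleGraph

variable {V : Type*} {G : SimpleGraph V}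

theorem injOn_neighborSet {α : Type*} {c : Sym2 V → α} (hc : IsProperEdgeColoring G c) (v : V) :
    Set.InjOn (fun w => c s(v, w)) (G.neighborSet v) := by
  intro w₁ h₁ w₂ h₂ hcol
  by_contra hne
  exact hc _ h₁ _ h₂ (fun h => hne (Sym2.congr_right.1 h))
    ⟨v, Sym2.mem_mk_left v w₁, Sym2.mem_mk_left v w₂⟩ hcol

variable {k : ℕ} {c : Sym2 V → Fin k}

theorem exists_adj_color (hc : IsProperEdgeColoring G c) {v : V}
    (hv : (G.neighborSet v).ncard = k) (i : Fin k) : ∃ w, G.Adj v w ∧ c s(v, w) = i := by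
  have himage : (fun w => c s(v, w)) '' G.neighborSet v = Set.univ := by
    refine Set.eq_of_subset_of_ncard_le (Set.subset_univ _) ?_
    rw [Set.ncard_univ, Nat.card_eq_fintype_card, Fintype.card_fin,
      (hc.injOn_neighborSet v).ncard_image, hv]
  obtain ⟨w, hw, hcol⟩ : i ∈ (fun w => c s(v, w)) '' G.neighborSet v := himage ▸ Set.mem_univ i
  exact ⟨w, hw, hcol⟩

theorem exists_involutive_adj_color (hc : IsProperEdgeColoring G c)
    (hreg : ∀ v, (G.neighborSet v).ncard = k) (i : Fin k) :
    ∃ f : V → V, Function.Involutive f ∧ ∀ v, G.Adj v (f v) ∧ c s(v, f v) = i := by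
  choose f hf using fun v => hc.exists_adj_color (hreg v) i
  refine ⟨f, fun v => hc.injOn_neighborSet (f v) (hf (f v)).1 (hf v).1.symm ?_, hf⟩
  change c s(f v, f (f v)) = c s(f v, v)
  rw [(hf (f v)).2, Sym2.eq_swap, (hf v).2]

theorem even_ncard_iff [Finite V] (hc : IsProperEdgeColoring G c)
    (hreg : ∀ v, (G.neighborSet v).ncard = k) {x y : V} (hxy : G.Adj x y) {S : Set V}
    (hxS : x ∉ S) (hS : ∀ u ∈ S, G.neighborSet u ⊆ insert x S) :
    Even S.ncard ↔ y ∉ S := by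
  obtain ⟨f, hf, hfc⟩ := hc.exists_involutive_adj_color hreg (c s(x, y))
  have hfx : f x = y := hc.injOn_neighborSet x (hfc x).1 hxy (hfc x).2
  rw [← hfx]
  exact even_ncard_iff_of_involutive_adj hf (fun v => (hfc v).1) hxS hS

end IsProperEdgeColoring

theorem stmt_5_general {V : Type} [Fintype V] (k : ℕ) (G : SimpleGraph V)
    (hreg : ∀ v, (G.neighborSet v).ncard = k) (hconn : G.Connected)
    (x : V) (hx : ¬ (G.induce {x}ᶜ).Connected) :
    ¬ ∃ c : Sym2 V → Fin k, IsProperEdgeColoring G c := by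
  rintro ⟨c, hc⟩
  -- the colour `c s(x, x) : Fin k` shows `0 < k`, so `x` has a neighbour
  obtain ⟨a, hxa⟩ : (G.neighborSet x).Nonempty :=
    Set.nonempty_of_ncard_ne_zero (hreg x ▸ (c s(x, x)).pos.ne')
  obtain ⟨S, hxS, hS, hSne, hTne⟩ := exists_separation_of_not_connected_induce hx hxa.ne'
  obtain ⟨y₁, hy₁S, hxy₁⟩ := hconn.exists_adj_mem hxS hS hSne
  obtain ⟨y₂, hy₂T, hxy₂⟩ := hconn.exists_adj_mem (Set.notMem_compl_iff.2 (Set.mem_insert x S))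
    (compl_insert_neighborSet_subset hS) hTne
  have hy₂S : y₂ ∉ S := fun h => hy₂T (Set.mem_insert_of_mem x h)
  exact (hc.even_ncard_iff hreg hxy₁ hxS hS).1 ((hc.even_ncard_iff hreg hxy₂ hxS hS).2 hy₂S) hy₁S

theorem stmt_5 {V : Type} [Fintype V] (k : ℕ) (hk : 0 < k) (G : SimpleGraph V)
    (hreg : ∀ v, (G.neighborSet v).ncard = k) (hconn : G.Connected)
    (x : V) (hx : ¬ (G.induce {x}ᶜ).Connected) :
    ¬ ∃ c : Sym2 V → Fin k, IsProperEdgeColoring G c :=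
  stmt_5_general k G hreg hconn x hx
end

section
/- For every graph G with maximum degree at most 3, there exists a proper edge colouring of G with no rainbow copy of the 4-cycle C_4. -/
/-!
Call two edges of `G` opposite if they are opposite edges of a 4-cycle, and colour each edge by
its class under the equivalence relation this generates; then no 4-cycle is rainbow. If `G` has
maximum degree at most 3 and contains no `K_{2,3}`, every class is a matching, so the colouring is
proper: on a shortest chain of opposite edges joining two edges through a common vertex `v`, the
four neighbours of `v` in the two end 4-cycles cannot all be distinct, and each coincidence
gives a shorter such chain or a `K_{2,3}`.

A `K_{2,3}` in a graph of maximum degree 3, together with a further vertex adjacent to two vertices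
of its larger side if there is one, spans a bipartite subgraph `H` containing every 4-cycle of `G`
that it meets. A Latin-square colouring of `H` uses three colours, so it has no rainbow 4-cycle,
and it combines with a colouring of `G \ H`, obtained by induction, on disjoint palettes.
-/

open SimpleGraph

variable {V α β : Type*} {G H : SimpleGraph V}

structure IsFourCycle (G : SimpleGraph V) (p q r s : V) : Prop where
  adj_pq : G.Adj p q
  adj_qr : G.Adj q r
  adj_rs : G.Adj r s
  adj_sp : G.Adj s p
  ne_pr : p ≠ r
  ne_qs : q ≠ s

namespace IsFourCycle

variable {p q r s : V}

lemma rotate (h : IsFourCycle G p q r s) : IsFourCycle G q r s p :=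
  ⟨h.adj_qr, h.adj_rs, h.adj_sp, h.adj_pq, h.ne_qs, h.ne_pr.symm⟩

lemma reverse (h : IsFourCycle G p q r s) : IsFourCycle G q p s r :=
  ⟨h.adj_pq.symm, h.adj_sp.symm, h.adj_rs.symm, h.adj_qr.symm, h.ne_qs, h.ne_pr⟩

end IsFourCycle

def NoRainbowFourCycle (G : SimpleGraph V) (c : Sym2 V → α) : Prop :=
  ∀ ⦃p q r s⦄, IsFourCycle G p q r s → ¬ [c s(p, q), c s(q, r), c s(r, s), c s(s, p)].Nodup

theorem not_hasRainbowCopy_cycleGraph_four {c : Sym2 V → α} (hc : NoRainbowFourCycle G c) :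
    ¬ HasRainbowCopy G c (cycleGraph 4) := by
  rintro ⟨f, hf, hrb⟩
  refine hc ⟨hf 0 1 (by decide), hf 1 2 (by decide), hf 2 3 (by decide), hf 3 0 (by decide),
    f.injective.ne (by decide), f.injective.ne (by decide)⟩ ?_
  simp only [List.nodup_cons, List.mem_cons, List.not_mem_nil, or_false, not_or, List.nodup_nil,
    not_false_eq_true, and_true]
  refine ⟨⟨?_, ?_, ?_⟩, ⟨?_, ?_⟩, ?_⟩ <;> refine hrb _ _ _ _ ?_ ?_ ?_ <;> decide

theorem noRainbowFourCycle_of_card_le_three [Fintype α] (hα : Fintype.card α ≤ 3)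
    (c : Sym2 V → α) : NoRainbowFourCycle G c := fun _ _ _ _ _ h => by
  have := h.length_le_card
  simp only [List.length_cons, List.length_nil] at this
  omega

theorem exists_nat_coloring [Countable α] {c : Sym2 V → α} (hc : IsProperEdgeColoring G c)
    (hc' : NoRainbowFourCycle G c) :
    ∃ c' : Sym2 V → ℕ, IsProperEdgeColoring G c' ∧ NoRainbowFourCycle G c' := by
  obtain ⟨f, hf⟩ := exists_injective_nat α
  exact ⟨f ∘ c, fun e₁ h₁ e₂ h₂ hne hv => hf.ne (hc e₁ h₁ e₂ h₂ hne hv),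
    fun _ _ _ _ hsq hnd => hc' hsq (List.Nodup.of_map f (by exact hnd))⟩

def FourCycleClosed (H G : SimpleGraph V) : Prop :=
  ∀ ⦃p q r s⦄, IsFourCycle G p q r s → H.Adj p q → H.Adj q r

namespace FourCycleClosed

variable {p q r s : V}

lemma isFourCycle (hH : FourCycleClosed H G) (h : IsFourCycle G p q r s) (hpq : H.Adj p q) :
    IsFourCycle H p q r s :=
  have hqr := hH h hpq
  have hrs := hH h.rotate hqr
  ⟨hpq, hqr, hrs, hH h.rotate.rotate hrs, h.ne_pr, h.ne_qs⟩

lemma isFourCycle_or_isFourCycle_sdiff (hH : FourCycleClosed H G) (h : IsFourCycle G p q r s) :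
    IsFourCycle H p q r s ∨ IsFourCycle (G \ H) p q r s := by
  by_cases hpq : H.Adj p q
  · exact Or.inl (hH.isFourCycle h hpq)
  refine Or.inr ⟨⟨h.adj_pq, hpq⟩, ⟨h.adj_qr, fun hqr => hpq ?_⟩,
    ⟨h.adj_rs, fun hrs => hpq ?_⟩, ⟨h.adj_sp, fun hsp => hpq ?_⟩, h.ne_pr, h.ne_qs⟩
  · exact (hH.isFourCycle h.rotate hqr).adj_sp
  · exact (hH.isFourCycle h.rotate.rotate hrs).adj_rs
  · exact (hH.isFourCycle h.rotate.rotate.rotate hsp).adj_qr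

end FourCycleClosed

theorem exists_coloring_of_fourCycleClosed (hH : FourCycleClosed H G)
    {c₁ : Sym2 V → α} {c₂ : Sym2 V → β}
    (hc₁ : IsProperEdgeColoring H c₁) (hc₁' : NoRainbowFourCycle H c₁)
    (hc₂ : IsProperEdgeColoring (G \ H) c₂) (hc₂' : NoRainbowFourCycle (G \ H) c₂) :
    ∃ c : Sym2 V → α ⊕ β, IsProperEdgeColoring G c ∧ NoRainbowFourCycle G c := by
  classical
  refine ⟨fun e => if e ∈ H.edgeSet then .inl (c₁ e) else .inr (c₂ e), ?_, ?_⟩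
  · intro e₁ he₁ e₂ he₂ hne hv
    by_cases m₁ : e₁ ∈ H.edgeSet <;> by_cases m₂ : e₂ ∈ H.edgeSet <;>
      simp only [m₁, m₂, if_true, if_false, ne_eq, Sum.inl.injEq, Sum.inr.injEq, reduceCtorEq,
        not_false_eq_true]
    · exact hc₁ e₁ m₁ e₂ m₂ hne hv
    · exact hc₂ e₁ (by simp [he₁, m₁]) e₂ (by simp [he₂, m₂]) hne hv
  · intro p q r s hsq
    rcases hH.isFourCycle_or_isFourCycle_sdiff hsq with h | h
    · simp only [mem_edgeSet, h.adj_pq, h.adj_qr, h.adj_rs, h.adj_sp, if_true]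
      exact fun hnd => hc₁' h (List.Nodup.of_map Sum.inl (by exact hnd))
    · simp only [mem_edgeSet, h.adj_pq.2, h.adj_qr.2, h.adj_rs.2, h.adj_sp.2, if_false]
      exact fun hnd => hc₂' h (List.Nodup.of_map Sum.inr (by exact hnd))

namespace MaxDegreeLE

variable [Finite V]

lemma mono {k : ℕ} (hG : MaxDegreeLE G k) (hHG : H ≤ G) : MaxDegreeLE H k :=
  fun v => (Set.ncard_le_ncard (fun _ h => hHG h) (Set.toFinite _)).trans (hG v)

lemma neighborSet_eq (hG : MaxDegreeLE G 3) {v p q r : V} (hp : G.Adj v p) (hq : G.Adj v q)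
    (hr : G.Adj v r) (hpq : p ≠ q) (hpr : p ≠ r) (hqr : q ≠ r) :
    G.neighborSet v = {p, q, r} :=
  (Set.eq_of_subset_of_ncard_le (by rintro _ (rfl | rfl | rfl) <;> assumption)
    (by rw [Set.ncard_eq_three.2 ⟨p, q, r, hpq, hpr, hqr, rfl⟩]; exact hG v)).symm

lemma eq_or_eq_of_adj (hG : MaxDegreeLE G 3) {v p q r s : V} (hp : G.Adj v p) (hq : G.Adj v q)
    (hr : G.Adj v r) (hs : G.Adj v s) (hpq : p ≠ q) (hrs : r ≠ s) :
    p = r ∨ p = s ∨ q = r ∨ q = s := by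
  by_contra! h
  obtain ⟨hpr, hps, hqr, hqs⟩ := h
  rcases (hG.neighborSet_eq hp hq hr hpq hpr hqr).subset hs with h | h | h
  exacts [hps h.symm, hqs h.symm, hrs h.symm]

end MaxDegreeLE

def oppositeGraph (G : SimpleGraph V) : SimpleGraph (Sym2 V) :=
  fromRel fun e f => ∃ p q r s, IsFourCycle G p q r s ∧ e = s(p, q) ∧ f = s(r, s)

lemma oppositeGraph_adj {e f : Sym2 V} :
    (oppositeGraph G).Adj e f ↔
      ∃ p q r s, IsFourCycle G p q r s ∧ e = s(p, q) ∧ f = s(r, s) := by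
  simp only [oppositeGraph, fromRel_adj]
  constructor
  · rintro ⟨-, h | ⟨p, q, r, s, h, rfl, rfl⟩⟩
    · exact h
    · exact ⟨r, s, p, q, h.rotate.rotate, rfl, rfl⟩
  · rintro ⟨p, q, r, s, h, rfl, rfl⟩
    refine ⟨fun he => ?_, Or.inl ⟨p, q, r, s, h, rfl, rfl⟩⟩
    rcases Sym2.mem_iff.1 (he ▸ Sym2.mem_mk_left p q : p ∈ s(r, s)) with hp | hp
    · exact h.ne_pr hp
    · exact h.adj_sp.ne hp.symm

lemma exists_isFourCycle_of_oppositeGraph_adj {e f : Sym2 V} (h : (oppositeGraph G).Adj e f)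
    {v : V} (hv : v ∈ e) :
    ∃ v' u u', e = s(v, v') ∧ f = s(u, u') ∧ IsFourCycle G v v' u' u := by
  obtain ⟨p, q, r, s, hpqrs, rfl, rfl⟩ := oppositeGraph_adj.1 h
  rcases Sym2.mem_iff.1 hv with rfl | rfl
  · exact ⟨q, s, r, rfl, Sym2.eq_swap, hpqrs⟩
  · exact ⟨p, r, s, Sym2.eq_swap, rfl, hpqrs.reverse⟩

lemma notMem_of_oppositeGraph_adj {e f : Sym2 V} (h : (oppositeGraph G).Adj e f) {v : V}
    (hv : v ∈ e) : v ∉ f := by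
  obtain ⟨v', u, u', -, rfl, hc⟩ := exists_isFourCycle_of_oppositeGraph_adj h hv
  rintro hu
  rcases Sym2.mem_iff.1 hu with rfl | rfl
  · exact hc.adj_sp.ne rfl
  · exact hc.ne_pr rfl

structure IsK23 (G : SimpleGraph V) (a b x y z : V) : Prop where
  ne_ab : a ≠ b
  ne_xy : x ≠ y
  ne_xz : x ≠ z
  ne_yz : y ≠ z
  adj_ax : G.Adj a x
  adj_ay : G.Adj a y
  adj_az : G.Adj a z
  adj_bx : G.Adj b x
  adj_by : G.Adj b y
  adj_bz : G.Adj b z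

lemma isK23_of_isFourCycle {v v' w' u u' : V} (h : IsFourCycle G v v' u' u)
    (h' : IsFourCycle G v w' u' u) (hne : v' ≠ w') : IsK23 G v u' u v' w' :=
  ⟨h.ne_pr, h.ne_qs.symm, h'.ne_qs.symm, hne, h.adj_sp.symm, h.adj_pq, h'.adj_pq, h.adj_rs,
    h.adj_qr.symm, h'.adj_qr.symm⟩

lemma Walk.penultimate_tail {u v : V} {p : G.Walk u v} (hp : 2 ≤ p.length) :
    p.tail.penultimate = p.penultimate := by
  simp only [Walk.getVert_tail, Walk.length_tail]
  congr 1
  omega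

theorem eq_or_disjoint_of_walk [Finite V] (hG : MaxDegreeLE G 3)
    (hK : ∀ a b x y z, ¬ IsK23 G a b x y z) (n : ℕ) :
    ∀ {e f : Sym2 V} (w : (oppositeGraph G).Walk e f), w.length = n →
      e = f ∨ ∀ v ∈ e, v ∉ f := by
  induction n using Nat.strong_induction_on with
  | _ n ih =>
  intro e f w hn
  by_contra! h
  obtain ⟨hef, v, hve, hvf⟩ := h
  have hnil : ¬ w.Nil := fun h => hef h.eq
  have hfirst := w.adj_snd hnil
  have hlast := w.adj_penultimate hnil
  have hvsnd := notMem_of_oppositeGraph_adj hfirst hve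
  have hvpen := notMem_of_oppositeGraph_adj hlast.symm hvf
  have hn2 : 2 ≤ n := by
    by_contra! hn2
    have hsnd : w.snd = f := w.getVert_of_length_le (by omega)
    exact hvsnd (hsnd.symm ▸ hvf)
  obtain ⟨v', u, u', rfl, hsnd, hc⟩ := exists_isFourCycle_of_oppositeGraph_adj hfirst hve
  obtain ⟨w', t, t', rfl, hpen, hc'⟩ := exists_isFourCycle_of_oppositeGraph_adj hlast.symm hvf
  rcases hG.eq_or_eq_of_adj hc.adj_pq hc.adj_sp.symm hc'.adj_pq hc'.adj_sp.symm hc.ne_qs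
    hc'.ne_qs with rfl | rfl | rfl | rfl
  · exact hef rfl
  · rcases ih (n - 1) (by omega) w.dropLast (by simp [hn]) with h | h
    · exact hvpen (h ▸ hve)
    · exact h v' (by simp) (by simp [hpen])
  · rcases ih (n - 1) (by omega) w.tail (by simp [hn]) with h | h
    · exact hvsnd (by rwa [h])
    · exact h u (by simp [hsnd]) (by simp)
  have htail : w.tail.penultimate = w.penultimate := Walk.penultimate_tail (hn ▸ hn2)
  have hmid : w.snd = w.penultimate := by
    have hlen : w.tail.dropLast.length = n - 2 := by
      simp only [Walk.length_dropLast, Walk.length_tail, hn]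
      omega
    rcases ih (n - 2) (by omega) w.tail.dropLast hlen with h | h
    · exact h.trans htail
    · exact absurd (by simp [hpen] : u ∈ w.penultimate) (htail ▸ h u (by simp [hsnd]))
  obtain rfl | hn3 := hn2.eq_or_lt
  · -- the two end 4-cycles share their middle edge `s(u, u')`
    rw [hsnd, hpen, Sym2.congr_right] at hmid
    subst hmid
    exact hK _ _ _ _ _ (isK23_of_isFourCycle hc hc' fun h => hef (h ▸ rfl))
  · rcases ih 2 hn3 (Walk.cons hfirst (Walk.cons (hmid ▸ hlast) Walk.nil)) rfl with h | h
    · exact hef h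
    · exact h v hve hvf

theorem exists_coloring_of_forall_not_isK23 [Finite V] (hG : MaxDegreeLE G 3)
    (hK : ∀ a b x y z, ¬ IsK23 G a b x y z) :
    ∃ c : Sym2 V → (oppositeGraph G).ConnectedComponent,
      IsProperEdgeColoring G c ∧ NoRainbowFourCycle G c := by
  refine ⟨(oppositeGraph G).connectedComponentMk, ?_, fun p q r s hc hnd => ?_⟩
  · intro e₁ _ e₂ _ hne ⟨v, hv₁, hv₂⟩ heq
    obtain ⟨w⟩ := ConnectedComponent.exact heq
    exact (eq_or_disjoint_of_walk hG hK _ w rfl).elim hne fun h => h v hv₁ hv₂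
  · have : (oppositeGraph G).connectedComponentMk s(p, q) =
        (oppositeGraph G).connectedComponentMk s(r, s) :=
      ConnectedComponent.eq.2 (oppositeGraph_adj.2 ⟨p, q, r, s, hc, rfl, rfl⟩).reachable
    simp [this] at hnd

lemma encard_le_three (a b c : V) : ({a, b, c} : Set V).encard ≤ 3 := by
  classical
  have : ({a, b, c} : Set V) = (({a, b, c} : Finset V) : Set V) := by simp
  rw [this, Set.encard_coe_eq_coe_finsetCard]
  exact_mod_cast Finset.card_le_three

lemma exists_injOn_fin_three {A B : Set V} (hAB : Disjoint A B) (hA : A.encard ≤ 3)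
    (hB : B.encard ≤ 3) : ∃ ℓ : V → Fin 3, Set.InjOn ℓ A ∧ Set.InjOn ℓ B := by
  classical
  have h3 : (Set.univ : Set (Fin 3)).encard = 3 := by simp
  obtain ⟨f, -, hf⟩ := (Set.finite_of_encard_le_coe hA).exists_injOn_of_encard_le (h3 ▸ hA)
  obtain ⟨g, -, hg⟩ := (Set.finite_of_encard_le_coe hB).exists_injOn_of_encard_le (h3 ▸ hB)
  exact ⟨A.piecewise f g, hf.congr fun v hv => (A.piecewise_eq_of_mem f g hv).symm,
    hg.congr fun v hv => (A.piecewise_eq_of_notMem f g (Set.disjoint_right.1 hAB hv)).symm⟩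

lemma exists_mk_eq_of_mem_edgeSet_between {A B : Set V} {e : Sym2 V}
    (he : e ∈ (G.between A B).edgeSet) : ∃ p ∈ A, ∃ q ∈ B, e = s(p, q) := by
  induction e using Sym2.ind with
  | _ p q =>
  rcases he.2 with ⟨hp, hq⟩ | ⟨hp, hq⟩
  · exact ⟨p, hp, q, hq, rfl⟩
  · exact ⟨q, hq, p, hp, Sym2.eq_swap⟩

lemma isProperEdgeColoring_between {M : Type*} [AddCancelCommMonoid M] {A B : Set V}
    (hAB : Disjoint A B) {ℓ : V → M} (hA : Set.InjOn ℓ A) (hB : Set.InjOn ℓ B) :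
    IsProperEdgeColoring (G.between A B)
      (Sym2.lift ⟨fun p q => ℓ p + ℓ q, fun _ _ => add_comm _ _⟩) := by
  intro e₁ he₁ e₂ he₂ hne ⟨v, hv₁, hv₂⟩ hc
  obtain ⟨p₁, hp₁, q₁, hq₁, rfl⟩ := exists_mk_eq_of_mem_edgeSet_between he₁
  obtain ⟨p₂, hp₂, q₂, hq₂, rfl⟩ := exists_mk_eq_of_mem_edgeSet_between he₂
  simp only [Sym2.lift_mk] at hc
  rcases Sym2.mem_iff.1 hv₁ with rfl | rfl <;> rcases Sym2.mem_iff.1 hv₂ with h | h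
  · subst h
    exact hne (by rw [hB hq₁ hq₂ (add_left_cancel hc)])
  · exact Set.disjoint_left.1 hAB hp₁ (h ▸ hq₂)
  · exact Set.disjoint_left.1 hAB hp₂ (h ▸ hq₁)
  · subst h
    exact hne (by rw [hA hp₁ hp₂ (add_right_cancel hc)])

namespace IsK23

variable {a b x y z : V}

lemma swap (h : IsK23 G a b x y z) : IsK23 G a b x z y :=
  ⟨h.ne_ab, h.ne_xz, h.ne_xy, h.ne_yz.symm, h.adj_ax, h.adj_az, h.adj_ay, h.adj_bx, h.adj_bz,
    h.adj_by⟩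

lemma rotate (h : IsK23 G a b x y z) : IsK23 G a b y z x :=
  ⟨h.ne_ab, h.ne_yz, h.ne_xy.symm, h.ne_xz.symm, h.adj_ay, h.adj_az, h.adj_ax, h.adj_by,
    h.adj_bz, h.adj_bx⟩

end IsK23

lemma fourCycleClosed_between {A B : Set V}
    (h : ∀ ⦃p q r s⦄, IsFourCycle G p q r s → p ∈ A → q ∈ B → r ∈ A ∧ s ∈ B) :
    FourCycleClosed (G.between A B) G := by
  rintro p q r s hc ⟨-, ⟨hp, hq⟩ | ⟨hp, hq⟩⟩
  · exact ⟨hc.adj_qr, Or.inr ⟨hq, (h hc hp hq).1⟩⟩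
  · exact ⟨hc.adj_qr, Or.inl ⟨hq, (h hc.reverse hq hp).2⟩⟩

section K23

variable [Finite V] {a b w x y z p q r s : V}

lemma mem_of_isFourCycle_of_isK23 (hG : MaxDegreeLE G 3) (hK : IsK23 G a b x y z)
    (hwa : w ≠ a) (hwb : w ≠ b) (hwx : G.Adj w x) (hwy : G.Adj w y) (hc : IsFourCycle G p q r s)
    (hp : p ∈ ({a, b, w} : Set V)) (hq : q ∈ ({x, y, z} : Set V)) :
    s ∈ ({x, y, z} : Set V) := by
  obtain ⟨hab, hxy, hxz, hyz, hax, hay, haz, hbx, hby, hbz⟩ := hK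
  have hNa := hG.neighborSet_eq hax hay haz hxy hxz hyz
  have hNb := hG.neighborSet_eq hbx hby hbz hxy hxz hyz
  have hsp : s ∈ G.neighborSet p := hc.adj_sp.symm
  rcases hp with rfl | rfl | rfl
  · exact hNa.subset hsp
  · exact hNb.subset hsp
  by_cases hwz : G.Adj p z
  · exact (hG.neighborSet_eq hwx hwy hwz hxy hxz hyz).subset hsp
  have hr : r ∈ ({a, b, p} : Set V) := by
    rcases hq with rfl | rfl | rfl
    · exact (hG.neighborSet_eq hax.symm hbx.symm hwx.symm hab hwa.symm hwb.symm).subset hc.adj_qr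
    · exact (hG.neighborSet_eq hay.symm hby.symm hwy.symm hab hwa.symm hwb.symm).subset hc.adj_qr
    · exact absurd hc.adj_pq hwz
  rcases hr with rfl | rfl | rfl
  · exact hNa.subset hc.adj_rs
  · exact hNb.subset hc.adj_rs
  · exact absurd rfl hc.ne_pr

/-- `K_{3,3}` minus the edge `wz` is symmetric under exchanging its sides together with `w ↔ z`,
so `mem_of_isFourCycle_of_isK23` yields both halves of the closure condition. -/
lemma fourCycleClosed_between_of_isK23_of_adj (hG : MaxDegreeLE G 3) (hK : IsK23 G a b x y z)
    (hwa : w ≠ a) (hwb : w ≠ b) (hwx : G.Adj w x) (hwy : G.Adj w y) :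
    FourCycleClosed (G.between {a, b, w} {x, y, z}) G := by
  have hK' : IsK23 G x y a b w := ⟨hK.ne_xy, hK.ne_ab, hwa.symm, hwb.symm, hK.adj_ax.symm,
    hK.adj_bx.symm, hwx.symm, hK.adj_ay.symm, hK.adj_by.symm, hwy.symm⟩
  refine fourCycleClosed_between fun p q r s hc hp hq => ⟨?_, ?_⟩
  · exact mem_of_isFourCycle_of_isK23 hG hK' hK.ne_xz.symm hK.ne_yz.symm hK.adj_az.symm
      hK.adj_bz.symm hc.reverse hq hp
  · exact mem_of_isFourCycle_of_isK23 hG hK hwa hwb hwx hwy hc hp hq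

lemma fourCycleClosed_between_of_isK23 (hG : MaxDegreeLE G 3) (hK : IsK23 G a b x y z)
    (hxy : ¬ ∃ w, w ≠ a ∧ w ≠ b ∧ G.Adj w x ∧ G.Adj w y)
    (hxz : ¬ ∃ w, w ≠ a ∧ w ≠ b ∧ G.Adj w x ∧ G.Adj w z)
    (hyz : ¬ ∃ w, w ≠ a ∧ w ≠ b ∧ G.Adj w y ∧ G.Adj w z) :
    FourCycleClosed (G.between {a, b} {x, y, z}) G := by
  refine fourCycleClosed_between fun p q r s hc hp hq => ?_
  have hs : s ∈ ({x, y, z} : Set V) := by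
    rcases hp with rfl | rfl
    · exact (hG.neighborSet_eq hK.adj_ax hK.adj_ay hK.adj_az hK.ne_xy hK.ne_xz hK.ne_yz).subset
        hc.adj_sp.symm
    · exact (hG.neighborSet_eq hK.adj_bx hK.adj_by hK.adj_bz hK.ne_xy hK.ne_xz hK.ne_yz).subset
        hc.adj_sp.symm
  refine ⟨?_, hs⟩
  by_contra hr
  simp only [Set.mem_insert_iff, Set.mem_singleton_iff, not_or] at hr
  have hrq := hc.adj_qr.symm
  have hrs := hc.adj_rs
  have hqs := hc.ne_qs
  rcases hq with rfl | rfl | rfl <;> rcases hs with rfl | rfl | rfl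
  all_goals first
    | exact hqs rfl
    | exact hxy ⟨r, hr.1, hr.2, by assumption, by assumption⟩
    | exact hxz ⟨r, hr.1, hr.2, by assumption, by assumption⟩
    | exact hyz ⟨r, hr.1, hr.2, by assumption, by assumption⟩

lemma exists_fourCycleClosed_between_of_isK23_of_adj (hG : MaxDegreeLE G 3)
    (hK : IsK23 G a b x y z) (hwa : w ≠ a) (hwb : w ≠ b) (hwx : G.Adj w x) (hwy : G.Adj w y) :
    ∃ A B : Set V, Disjoint A B ∧ A.encard ≤ 3 ∧ B.encard ≤ 3 ∧
      G.between A B ≠ ⊥ ∧ FourCycleClosed (G.between A B) G := by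
  have hwz : w ≠ z := by
    rintro rfl
    rcases (hG.neighborSet_eq hK.adj_az.symm hK.adj_bz.symm hwx hK.ne_ab hK.adj_ax.ne
      hK.adj_bx.ne).subset hwy with h | h | h
    exacts [hK.adj_ay.ne h.symm, hK.adj_by.ne h.symm, hK.ne_xy h.symm]
  refine ⟨{a, b, w}, {x, y, z}, ?_, encard_le_three _ _ _, encard_le_three _ _ _,
    ne_bot_iff_exists_adj.2 ⟨a, x, hK.adj_ax, Or.inl ⟨by simp, by simp⟩⟩,
    fourCycleClosed_between_of_isK23_of_adj hG hK hwa hwb hwx hwy⟩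
  simp only [Set.disjoint_insert_left, Set.disjoint_singleton_left, Set.mem_insert_iff,
    Set.mem_singleton_iff, not_or]
  exact ⟨⟨hK.adj_ax.ne, hK.adj_ay.ne, hK.adj_az.ne⟩,
    ⟨hK.adj_bx.ne, hK.adj_by.ne, hK.adj_bz.ne⟩, hwx.ne, hwy.ne, hwz⟩

lemma exists_fourCycleClosed_between_of_isK23 (hG : MaxDegreeLE G 3)
    (hK : IsK23 G a b x y z) :
    ∃ A B : Set V, Disjoint A B ∧ A.encard ≤ 3 ∧ B.encard ≤ 3 ∧
      G.between A B ≠ ⊥ ∧ FourCycleClosed (G.between A B) G := by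
  by_cases hxy : ∃ w, w ≠ a ∧ w ≠ b ∧ G.Adj w x ∧ G.Adj w y
  · obtain ⟨w, hwa, hwb, hwx, hwy⟩ := hxy
    exact exists_fourCycleClosed_between_of_isK23_of_adj hG hK hwa hwb hwx hwy
  by_cases hxz : ∃ w, w ≠ a ∧ w ≠ b ∧ G.Adj w x ∧ G.Adj w z
  · obtain ⟨w, hwa, hwb, hwx, hwz⟩ := hxz
    exact exists_fourCycleClosed_between_of_isK23_of_adj hG hK.swap hwa hwb hwx hwz
  by_cases hyz : ∃ w, w ≠ a ∧ w ≠ b ∧ G.Adj w y ∧ G.Adj w z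
  · obtain ⟨w, hwa, hwb, hwy, hwz⟩ := hyz
    exact exists_fourCycleClosed_between_of_isK23_of_adj hG hK.rotate hwa hwb hwy hwz
  refine ⟨{a, b}, {x, y, z}, ?_, by simpa using encard_le_three a b b, encard_le_three _ _ _,
    ne_bot_iff_exists_adj.2 ⟨a, x, hK.adj_ax, Or.inl ⟨by simp, by simp⟩⟩,
    fourCycleClosed_between_of_isK23 hG hK hxy hxz hyz⟩
  simp only [Set.disjoint_insert_left, Set.disjoint_singleton_left, Set.mem_insert_iff,
    Set.mem_singleton_iff, not_or]
  exact ⟨⟨hK.adj_ax.ne, hK.adj_ay.ne, hK.adj_az.ne⟩,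
    hK.adj_bx.ne, hK.adj_by.ne, hK.adj_bz.ne⟩

end K23

theorem exists_coloring [Finite V] (G : SimpleGraph V) (hG : MaxDegreeLE G 3) :
    ∃ c : Sym2 V → ℕ, IsProperEdgeColoring G c ∧ NoRainbowFourCycle G c := by
  induction G using WellFoundedLT.induction with
  | _ G ih =>
  by_cases hK : ∃ a b x y z, IsK23 G a b x y z
  · obtain ⟨a, b, x, y, z, hK⟩ := hK
    obtain ⟨A, B, hAB, hA, hB, hne, hclosed⟩ := exists_fourCycleClosed_between_of_isK23 hG hK
    obtain ⟨ℓ, hℓA, hℓB⟩ := exists_injOn_fin_three hAB hA hB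
    obtain ⟨c₂, hc₂, hc₂'⟩ := ih _ (sdiff_lt between_le hne) (hG.mono sdiff_le)
    obtain ⟨c, hc, hc'⟩ := exists_coloring_of_fourCycleClosed hclosed
      (isProperEdgeColoring_between hAB hℓA hℓB)
      (noRainbowFourCycle_of_card_le_three (Fintype.card_fin 3).le _) hc₂ hc₂'
    exact exists_nat_coloring hc hc'
  · simp only [not_exists] at hK
    obtain ⟨c, hc, hc'⟩ := exists_coloring_of_forall_not_isK23 hG hK
    exact exists_nat_coloring hc hc'

theorem stmt_12 {V : Type} [Fintype V] (G : SimpleGraph V) (h : MaxDegreeLE G 3) :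
    ∃ c : Sym2 V → ℕ, IsProperEdgeColoring G c ∧
      ¬ HasRainbowCopy G c (SimpleGraph.cycleGraph 4) := by
  obtain ⟨c, hc, hc'⟩ := exists_coloring G h
  exact ⟨c, hc, not_hasRainbowCopy_cycleGraph_four hc'⟩
end

section
/- Let G be a 3-regular graph, let M be a perfect matching of G, and let v_0 v_1 … v_{2k} v_0 be a cycle of odd length 2k+1 in the graph G − M obtained from G by deleting the edges of M. Then there exists an index i (with indices taken modulo 2k+1) such that the edge v_i v_{i+1} is free, i.e., none of the three pairs v_{i−2} v_{i+1}, v_{i−1} v_{i+2}, v_i v_{i+3} is an edge of M. -/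
open SimpleGraph

/-!
Write `c i` for `M.Adj (v i) (v (i + 3))`; the edge `v_i v_{i+1}` is free exactly when
`c (i - 2)`, `c (i - 1)` and `c i` all fail. Since `v (i + 3)` has only one `M`-neighbour,
`c i` and `c (i + 3)` cannot both hold. If no edge were free, every window of three
consecutive indices would contain some `c j`, which forces `c i → c (i + 2)`. As `2` is
invertible modulo the odd length `2k + 1`, this propagates `c i` to `c (i + 3)`.
-/

namespace ZMod

theorem two_mul_succ_eq_one (k : ℕ) : (2 : ZMod (2 * k + 1)) * (k + 1) = 1 := by
  have h : ((2 * k + 1 : ℕ) : ZMod (2 * k + 1)) = 0 := ZMod.natCast_self _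
  push_cast at h
  linear_combination h

theorem three_eq_zero_of_six_eq_zero {k : ℕ} (h : (6 : ZMod (2 * k + 1)) = 0) :
    (3 : ZMod (2 * k + 1)) = 0 := by
  linear_combination (k + 1 : ZMod (2 * k + 1)) * h - 3 * two_mul_succ_eq_one k

theorem exists_not_window_of_not_and_add_three {k : ℕ} (c : ZMod (2 * k + 1) → Prop)
    (hsep : ∀ i, c i → ¬ c (i + 3)) : ∃ i, ¬ c (i - 2) ∧ ¬ c (i - 1) ∧ ¬ c i := by
  by_contra! hnone
  have window : ∀ i, c (i - 2) ∨ c (i - 1) ∨ c i := fun i => by tauto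
  have step : ∀ i, c i → c (i + 2) := by
    intro i hi
    have w₃ := window (i + 3)
    have w₄ := window (i + 4)
    rw [show i + 3 - 2 = i + 1 by ring, show i + 3 - 1 = i + 2 by ring] at w₃
    rw [show i + 4 - 2 = i + 2 by ring, show i + 4 - 1 = i + 3 by ring] at w₄
    have hi₄ := hsep (i + 1)
    rw [show i + 1 + 3 = i + 4 by ring] at hi₄
    have := hsep i hi
    tauto
  have iterate : ∀ i (m : ℕ), c i → c (i + 2 * m) := by
    intro i m hi
    induction m with
    | zero => simpa using hi
    | succ m ih => simpa [mul_add, ← add_assoc] using step _ ih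
  obtain ⟨i, hi⟩ : ∃ i, c i := by
    rcases window 0 with h | h | h <;> exact ⟨_, h⟩
  apply hsep i hi
  have h₃ : (2 : ZMod (2 * k + 1)) * ((3 * (k + 1) : ℕ) : ZMod (2 * k + 1)) = 3 := by
    push_cast
    linear_combination 3 * two_mul_succ_eq_one k
  simpa only [h₃] using iterate i (3 * (k + 1)) hi

end ZMod

theorem SimpleGraph.not_adj_add_three_of_adj {V : Type*} {M : SimpleGraph V}
    (hM : ∀ x, (M.neighborSet x).Subsingleton) {k : ℕ} {v : ZMod (2 * k + 1) → V}
    (hinj : Function.Injective v) {i : ZMod (2 * k + 1)} (h : M.Adj (v i) (v (i + 3))) :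
    ¬ M.Adj (v (i + 3)) (v (i + 3 + 3)) := by
  intro h'
  have hi : i = i + 6 := by
    rw [show i + 6 = i + 3 + 3 by ring]
    exact hinj (hM _ h.symm h')
  have h3 := ZMod.three_eq_zero_of_six_eq_zero (left_eq_add.mp hi)
  rw [h3, add_zero] at h
  exact M.irrefl h

theorem stmt_13_general {V : Type}
    (M : SimpleGraph V) (hPM : ∀ v : V, ∃! w, M.Adj v w)
    (k : ℕ) (v : ZMod (2 * k + 1) → V) (hinj : Function.Injective v) :
    ∃ i : ZMod (2 * k + 1),
      ¬ M.Adj (v (i - 2)) (v (i + 1)) ∧ ¬ M.Adj (v (i - 1)) (v (i + 2)) ∧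
      ¬ M.Adj (v i) (v (i + 3)) := by
  have hM : ∀ x, (M.neighborSet x).Subsingleton := fun x _ hy _ hz =>
    (hPM x).unique hy hz
  obtain ⟨i, hi⟩ := ZMod.exists_not_window_of_not_and_add_three
    (fun i => M.Adj (v i) (v (i + 3))) fun _ => M.not_adj_add_three_of_adj hM hinj
  refine ⟨i, ?_⟩
  simpa only [show i - 2 + 3 = i + 1 by ring, show i - 1 + 3 = i + 2 by ring] using hi

theorem stmt_13 {V : Type} [Fintype V] (G : SimpleGraph V)
    (hreg : ∀ v, (G.neighborSet v).ncard = 3)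
    (M : SimpleGraph V) (hMG : M ≤ G) (hPM : ∀ v : V, ∃! w, M.Adj v w)
    (k : ℕ) (hk : 1 ≤ k) (v : ZMod (2 * k + 1) → V) (hinj : Function.Injective v)
    (hcyc : ∀ i, G.Adj (v i) (v (i + 1)) ∧ ¬ M.Adj (v i) (v (i + 1))) :
    ∃ i : ZMod (2 * k + 1),
      ¬ M.Adj (v (i - 2)) (v (i + 1)) ∧ ¬ M.Adj (v (i - 1)) (v (i + 2)) ∧
      ¬ M.Adj (v i) (v (i + 3)) :=
  stmt_13_general M hPM k v hinj
end

section
/- Every proper edge colouring of the graph G_{5,3} yields a rainbow copy of the cycle C_5 on 5 vertices; consequently AR_d(C_5) ≤ 6. -/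
open SimpleGraph

/-- The simple graph generated by symmetrising a relation and removing loops. -/
def graphFromRel {V : Type*} (r : V → V → Prop) : SimpleGraph V where
  Adj a b := a ≠ b ∧ (r a b ∨ r b a)
  symm := ⟨fun a b ⟨hne, h⟩ => ⟨hne.symm, h.symm⟩⟩
  loopless := ⟨fun _ ⟨hne, _⟩ => hne rfl⟩

/-- The graph `G_{2k-1,d}`: vertices `u_a` (`a : Fin k`) and `v_{i,j}`
(`(i,j) : Fin (k-1) × Fin d`), with `v_{i,j}` adjacent to `u_i` and `u_{i+1}`,
together with the edge `u_{k-1} u_0`. -/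
def GOdd (k d : ℕ) : SimpleGraph (Fin k ⊕ Fin (k - 1) × Fin d) :=
  graphFromRel (fun a b =>
    match a, b with
    | Sum.inl a, Sum.inr (i, j) => (a : ℕ) = (i : ℕ) ∨ (a : ℕ) = (i : ℕ) + 1
    | Sum.inl a, Sum.inl b => (a : ℕ) = k - 1 ∧ (b : ℕ) = 0
    | _, _ => False)

/-
Write `u₀, u₁, u₂` and `v₀ⱼ, v₁ₖ` for the vertices of `G_{5,3}`. For every `j, k` the closed walk
`u₀ v₀ⱼ u₁ v₁ₖ u₂` is a `C₅`, and properness already separates the colours of consecutive edges.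
At most one of the edges `u₁v₀ⱼ`, `u₁v₁ₖ` has the colour of `u₂u₀`; by symmetry none of the
`u₁v₀ⱼ` does. If no choice of `j` works for one of the (at least two) `k` with
`c(u₁v₁ₖ) ≠ c(u₂u₀)`, pigeonhole over the three values of `j` shows that `c(u₁v₁ₖ)` and `c(v₁ₖu₂)`
are colours at `u₀`, and that `c(v₁ₖu₂)` is also the colour of some `u₁v₀ⱼ`, hence differs from
every `c(u₁v₁ₖ')`. Two such `k` would give four distinct colours on the three edges `u₀v₀ⱼ`.
-/

open Function

section Pigeonhole

open Finset

theorem exists_ne_and_ne_of_injective {ι α β : Type*} [Fintype ι] {f : ι → α} {g : ι → β}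
    (hf : Injective f) (hg : Injective g) (hι : 2 < Fintype.card ι) (a : α) (b : β) :
    ∃ i, f i ≠ a ∧ g i ≠ b := by
  classical
  by_contra! h
  have : Injective fun i => decide (f i = a) := by
    intro i i' hii'
    simp only [decide_eq_decide] at hii'
    by_cases hi : f i = a
    · exact hf (hi.trans (hii'.1 hi).symm)
    · exact hg ((h i hi).trans (h i' (mt hii'.2 hi)).symm)
  exact hι.not_ge ((Fintype.card_le_of_injective _ this).trans_eq Fintype.card_bool)

theorem mem_range_of_forall_eq_or_eq_or_eq {ι α : Type*} [Fintype ι] {A B : ι → α}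
    (hA : Injective A) (hB : Injective B) (hι : 2 < Fintype.card ι) {d e : α}
    (h : ∀ j, A j = d ∨ A j = e ∨ B j = e) :
    d ∈ Set.range A ∧ e ∈ Set.range A ∧ e ∈ Set.range B := by
  refine ⟨?_, ?_, ?_⟩ <;> by_contra hne <;> simp only [Set.mem_range, not_exists] at hne
  · obtain ⟨j, hAj, hBj⟩ := exists_ne_and_ne_of_injective hA hB hι e e
    exact (h j).elim (hne j) (fun h' => h'.elim hAj hBj)
  · obtain ⟨j, hAj, hBj⟩ := exists_ne_and_ne_of_injective hA hB hι d e
    exact (h j).elim hAj (fun h' => h'.elim (hne j) hBj)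
  · obtain ⟨j, hAd, hAe⟩ := exists_ne_and_ne_of_injective hA hA hι d e
    exact (h j).elim hAd (fun h' => h'.elim hAe (hne j))

theorem exists_rainbow_indices_of_forall_ne {α : Type*} {A B D E : Fin 3 → α} {F : α}
    (hA : Injective A) (hB : Injective B) (hD : Injective D) (hE : Injective E)
    (hBD : ∀ j k, B j ≠ D k) (hBF : ∀ j, B j ≠ F) :
    ∃ j k, B j ≠ F ∧ D k ≠ F ∧ A j ≠ D k ∧ A j ≠ E k ∧ B j ≠ E k := by
  classical
  by_contra! h
  set K := univ.filter fun k => ¬D k = F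
  have hcol : ∀ k ∈ K, D k ∈ Set.range A ∧ E k ∈ Set.range A ∧ E k ∈ Set.range B := by
    intro k hk
    refine mem_range_of_forall_eq_or_eq_or_eq hA hB (by simp) fun j => ?_
    by_cases hAD : A j = D k
    · exact .inl hAD
    by_cases hAE : A j = E k
    · exact .inr (.inl hAE)
    exact .inr (.inr (h j k (hBF j) (mem_filter.1 hk).2 hAD hAE))
  have hK : 2 ≤ #K := by
    have hF : #(univ.filter fun k => D k = F) ≤ 1 :=
      card_le_one.2 fun k hk k' hk' => hD ((mem_filter.1 hk).2.trans (mem_filter.1 hk').2.symm)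
    have : #(univ.filter fun k => D k = F) + #K = 3 :=
      card_filter_add_card_filter_not (s := univ) (fun k => D k = F)
    omega
  have hdisj : Disjoint (K.image D) (K.image E) := by
    simp only [Finset.disjoint_left, mem_image, not_exists, not_and]
    rintro _ ⟨k, -, rfl⟩ k' hk' hDE
    obtain ⟨j, hj⟩ := (hcol k' hk').2.2
    exact hBD j k (hj.trans hDE)
  have hsub : K.image D ∪ K.image E ⊆ univ.image A := by
    simp only [union_subset_iff, image_subset_iff, mem_image, mem_univ, true_and]
    exact ⟨fun k hk => (hcol k hk).1, fun k hk => (hcol k hk).2.1⟩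
  have : #K + #K ≤ 3 := calc
    #K + #K = #(K.image D ∪ K.image E) := by
      rw [card_union_of_disjoint hdisj, card_image_of_injective _ hD, card_image_of_injective _ hE]
    _ ≤ #(univ.image A) := card_le_card hsub
    _ ≤ 3 := card_image_le.trans_eq (card_fin 3)
  omega

-- `A j, B j, D k, E k, F` are the colours of `u₀v₀ⱼ, v₀ⱼu₁, u₁v₁ₖ, v₁ₖu₂, u₂u₀`; the
-- conclusion covers the five pairs of non-consecutive edges of the pentagon.
theorem exists_rainbow_indices {α : Type*} {A B D E : Fin 3 → α} (F : α)
    (hA : Injective A) (hB : Injective B) (hD : Injective D) (hE : Injective E)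
    (hBD : ∀ j k, B j ≠ D k) :
    ∃ j k, B j ≠ F ∧ D k ≠ F ∧ A j ≠ D k ∧ A j ≠ E k ∧ B j ≠ E k := by
  by_cases hBF : ∀ j, B j ≠ F
  · exact exists_rainbow_indices_of_forall_ne hA hB hD hE hBD hBF
  obtain ⟨j₀, hj₀⟩ := not_forall_not.1 hBF
  obtain ⟨k, j, hDF, hBF, hED, hEA, hDA⟩ := exists_rainbow_indices_of_forall_ne hE hD hB hA
    (fun k j => (hBD j k).symm) fun k hk => hBD j₀ k (hj₀.trans hk.symm)
  exact ⟨j, k, hBF, hDF, hDA.symm, hEA.symm, hED.symm⟩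

end Pigeonhole

theorem SimpleGraph.exists_eq_mk_add_one_of_cycleGraph_adj {n : ℕ} [NeZero n] {u v : Fin n}
    (h : (cycleGraph n).Adj u v) : ∃ i, s(u, v) = s(i, i + 1) := by
  have eq_one {x : Fin n} (hx : x.val = 1) : x = 1 := Fin.ext (by
    rw [hx, Fin.val_one', Nat.mod_eq_of_lt (hx ▸ x.isLt)])
  rcases cycleGraph_adj'.1 h with h | h
  · exact ⟨v, by rw [Sym2.eq_swap, ← sub_eq_iff_eq_add'.1 (eq_one h)]⟩
  · exact ⟨u, by rw [← sub_eq_iff_eq_add'.1 (eq_one h)]⟩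

section Colouring

variable {V α : Type*} {G : SimpleGraph V} {c : Sym2 V → α}

theorem hasRainbowCopy_cycleGraph {n : ℕ} [NeZero n] (f : Fin n ↪ V) (col : Fin n → α)
    (hadj : ∀ i, G.Adj (f i) (f (i + 1))) (hcol : ∀ i, c s(f i, f (i + 1)) = col i)
    (hinj : Injective col) : HasRainbowCopy G c (cycleGraph n) := by
  have image_edge {u v i : Fin n} (h : s(u, v) = s(i, i + 1)) :
      s(f u, f v) = s(f i, f (i + 1)) := by
    simpa only [Sym2.map_mk] using congrArg (Sym2.map f) h
  refine ⟨f, fun u v huv => ?_, fun u v x y huv hxy hne => ?_⟩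
  · obtain ⟨i, hi⟩ := exists_eq_mk_add_one_of_cycleGraph_adj huv
    rw [← mem_edgeSet, image_edge hi]
    exact hadj i
  · obtain ⟨i, hi⟩ := exists_eq_mk_add_one_of_cycleGraph_adj huv
    obtain ⟨i', hi'⟩ := exists_eq_mk_add_one_of_cycleGraph_adj hxy
    rw [image_edge hi, image_edge hi', hcol, hcol]
    exact hinj.ne fun h => hne (by rw [hi, hi', h])

theorem IsProperEdgeColoring.apply_ne_apply (hc : IsProperEdgeColoring G c) {x y z : V}
    (hxy : G.Adj x y) (hxz : G.Adj x z) (hyz : y ≠ z) : c s(x, y) ≠ c s(x, z) :=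
  hc _ hxy _ hxz (mt Sym2.congr_right.1 hyz) ⟨x, Sym2.mem_mk_left x y, Sym2.mem_mk_left x z⟩

theorem IsProperEdgeColoring.injective_apply (hc : IsProperEdgeColoring G c) {ι : Type*}
    {x : V} {g : ι → V} (hg : Injective g) (hadj : ∀ i, G.Adj x (g i)) :
    Injective fun i => c s(x, g i) := fun i i' h =>
  by_contra fun hne => hc.apply_ne_apply (hadj i) (hadj i') (hg.ne hne) h

end Colouring

section Transfer

variable {V V' W : Type*} {G : SimpleGraph V} {G' : SimpleGraph V'}

theorem IsProperEdgeColoring.comp_sym2Map {α : Type*} {c : Sym2 V' → α}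
    (hc : IsProperEdgeColoring G' c) (f : Copy G G') :
    IsProperEdgeColoring G (c ∘ Sym2.map f.toHom) :=
  fun _ he₁ _ he₂ hne ⟨v, hv₁, hv₂⟩ =>
    hc _ (f.toHom.map_mem_edgeSet he₁) _ (f.toHom.map_mem_edgeSet he₂)
      ((Sym2.map.injective f.injective).ne hne)
      ⟨f.toHom v, Sym2.mem_map.2 ⟨v, hv₁, rfl⟩, Sym2.mem_map.2 ⟨v, hv₂, rfl⟩⟩

theorem HasRainbowCopy.of_comp_sym2Map {α : Type*} {c : Sym2 V' → α} {H : SimpleGraph W}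
    (f : Copy G G') (h : HasRainbowCopy G (c ∘ Sym2.map f.toHom) H) : HasRainbowCopy G' c H := by
  obtain ⟨g, hadj, hrainbow⟩ := h
  exact ⟨g.trans f.toEmbedding, fun u v huv => f.toHom.map_adj (hadj u v huv), hrainbow⟩

theorem ForcesRainbow.of_isContained {H : SimpleGraph W} (hG : G ⊑ G') (h : ForcesRainbow G H) :
    ForcesRainbow G' H :=
  fun _ hc => (h _ (hc.comp_sym2Map hG.some)).of_comp_sym2Map hG.some

theorem MaxDegreeLE.of_iso {k : ℕ} (e : G ≃g G') (h : MaxDegreeLE G k) : MaxDegreeLE G' k := by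
  intro w
  rw [← e.apply_symm_apply w, ← Set.ncard_congr' (e.mapNeighborSet _)]
  exact h _

end Transfer

section GOdd

variable {k d : ℕ}

theorem GOdd_adj_inl_inl {a b : Fin k} :
    (GOdd k d).Adj (.inl a) (.inl b) ↔
      a ≠ b ∧ ((a : ℕ) = k - 1 ∧ (b : ℕ) = 0 ∨ (b : ℕ) = k - 1 ∧ (a : ℕ) = 0) := by
  simp [GOdd, graphFromRel]

theorem GOdd_adj_inl_inr {a : Fin k} {i : Fin (k - 1)} {j : Fin d} :
    (GOdd k d).Adj (.inl a) (.inr (i, j)) ↔ (a : ℕ) = i ∨ (a : ℕ) = i + 1 := by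
  simp [GOdd, graphFromRel]

theorem GOdd_not_adj_inr_inr {p q : Fin (k - 1) × Fin d} : ¬(GOdd k d).Adj (.inr p) (.inr q) := by
  simp [GOdd, graphFromRel]

instance : DecidableRel (GOdd k d).Adj
  | .inl _, .inl _ => decidable_of_iff _ GOdd_adj_inl_inl.symm
  | .inl _, .inr (_, _) => decidable_of_iff _ GOdd_adj_inl_inr.symm
  | .inr (_, _), .inl _ => decidable_of_iff _ (GOdd_adj_inl_inr.symm.trans (adj_comm _ _ _))
  | .inr _, .inr _ => isFalse GOdd_not_adj_inr_inr

end GOdd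

theorem maxDegreeLE_GOdd_three_three : MaxDegreeLE (GOdd 3 3) 6 := by
  intro v
  rw [Set.ncard_eq_toFinset_card']
  fin_cases v <;> decide

theorem forcesRainbow_GOdd_three_three : ForcesRainbow (GOdd 3 3) (cycleGraph 5) := by
  intro c hc
  have adj₀ (j) : (GOdd 3 3).Adj (.inl 0) (.inr (0, j)) := GOdd_adj_inl_inr.2 (by simp)
  have adj₁ (j) : (GOdd 3 3).Adj (.inl 1) (.inr (0, j)) := GOdd_adj_inl_inr.2 (by simp)
  have adj₂ (k) : (GOdd 3 3).Adj (.inl 1) (.inr (1, k)) := GOdd_adj_inl_inr.2 (by simp)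
  have adj₃ (k) : (GOdd 3 3).Adj (.inl 2) (.inr (1, k)) := GOdd_adj_inl_inr.2 (by simp)
  have adj₄ : (GOdd 3 3).Adj (.inl 2) (.inl 0) := GOdd_adj_inl_inl.2 (by simp)
  have inr_inj (i : Fin 2) : Injective fun j : Fin 3 => (.inr (i, j) : Fin 3 ⊕ Fin 2 × Fin 3) :=
    fun j j' h => by simpa using h
  have hBD (j k) : c s(.inl 1, .inr (0, j)) ≠ c s(.inl 1, .inr (1, k)) :=
    hc.apply_ne_apply (adj₁ j) (adj₂ k) (by simp)
  obtain ⟨j, k, hBF, hDF, hAD, hAE, hBE⟩ := exists_rainbow_indices (c s(.inl 2, .inl 0))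
    (hc.injective_apply (inr_inj 0) adj₀) (hc.injective_apply (inr_inj 0) adj₁)
    (hc.injective_apply (inr_inj 1) adj₂) (hc.injective_apply (inr_inj 1) adj₃) hBD
  refine hasRainbowCopy_cycleGraph
    ⟨![.inl 0, .inr (0, j), .inl 1, .inr (1, k), .inl 2], by rw [← List.nodup_ofFn]; simp⟩
    ![c s(.inl 0, .inr (0, j)), c s(.inl 1, .inr (0, j)), c s(.inl 1, .inr (1, k)),
      c s(.inl 2, .inr (1, k)), c s(.inl 2, .inl 0)] ?_ ?_ ?_
  · intro i
    fin_cases i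
    exacts [adj₀ j, (adj₁ j).symm, adj₂ k, (adj₃ k).symm, adj₄]
  · intro i
    fin_cases i
    exacts [rfl, congrArg c Sym2.eq_swap, rfl, congrArg c Sym2.eq_swap, rfl]
  · rw [← List.nodup_ofFn]
    simp only [List.ofFn_succ, List.ofFn_zero, Matrix.cons_val_zero, Matrix.cons_val_succ,
      List.nodup_cons, List.mem_cons, List.not_mem_nil, or_false, not_or, List.nodup_nil,
      and_true, not_false_eq_true]
    refine ⟨⟨?_, hAD, hAE, ?_⟩, ⟨hBD j k, hBE, hBF⟩, ⟨?_, hDF⟩, ?_⟩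
    · exact hc _ (adj₀ j) _ (adj₁ j) (by simp) ⟨.inr (0, j), by simp, by simp⟩
    · exact hc _ (adj₀ j) _ adj₄ (by simp) ⟨.inl 0, by simp, by simp⟩
    · exact hc _ (adj₂ k) _ (adj₃ k) (by simp) ⟨.inr (1, k), by simp, by simp⟩
    · exact hc _ (adj₃ k) _ adj₄ (by simp) ⟨.inl 2, by simp, by simp⟩

theorem stmt_14 :
    ForcesRainbow (GOdd 3 3) (SimpleGraph.cycleGraph 5) ∧
    ∃ (n : ℕ) (G : SimpleGraph (Fin n)),
      MaxDegreeLE G 6 ∧ ForcesRainbow G (SimpleGraph.cycleGraph 5) := by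
  have hcard : Fintype.card (Fin 3 ⊕ Fin (3 - 1) × Fin 3) = 9 := rfl
  exact ⟨forcesRainbow_GOdd_three_three, 9, (GOdd 3 3).overFin hcard,
    maxDegreeLE_GOdd_three_three.of_iso (overFinIso _ hcard),
    forcesRainbow_GOdd_three_three.of_isContained ⟨(overFinIso _ hcard).toCopy⟩⟩
end

section
/- For every positive integer r, let n = 3^{r−1} + 1. Then there exists a proper edge colouring of the complete bipartite graph K_{3^r,3^r} with no rainbow copy of the complete bipartite graph K_{2,n}. (Explicitly: identify each part of K_{3^r,3^r} with the vector space (Z_3)^r and colour the edge between u in the first part and v in the second part by u − v ∈ (Z_3)^r; this colouring is proper and contains no rainbow K_{2,n}.) -/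
open SimpleGraph

/-!
Write the colour `u - v` of the edge `inl u — inr v` as `σ x + σ y`, where `σ` is the identity on
the left side and negation on the right; properness is then the injectivity of `σ` on each side.
For a rainbow `K_{2,n}` with left vertices `x₀ ≠ x₁` and right vertices `y_j`, the condition
`σ x₀ + σ y_j ≠ σ x₁ + σ y_k` says that `S = {σ y_j}` has no two elements differing by
`d = σ x₁ - σ x₀ ≠ 0`. Each coset of the line `{0, d, 2d}` meets `S` at most once, so
`n = |S| ≤ 3^(r-1)`.
-/
theorem three_mul_card_le_of_sub_ne {G ι : Type*} [AddCommGroup G] [Finite G] [Finite ι]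
    {d : G} (hd : addOrderOf d = 3) {p : ι → G} (hp : Function.Injective p)
    (hsub : ∀ i j, p i - p j ≠ d) : 3 * Nat.card ι ≤ Nat.card G := by
  classical
  set H := AddSubgroup.zmultiples d
  have hmk : Function.Injective fun i => (p i : G ⧸ H) := by
    intro i j hij
    obtain ⟨n, hn, hnd⟩ := Finset.mem_image.mp <|
      (mem_zmultiples_iff_mem_range_addOrderOf (x := d)).mp (QuotientAddGroup.eq.mp hij)
    have h3d : 3 • d = 0 := hd ▸ addOrderOf_nsmul_eq_zero d
    rw [hd, Finset.mem_range] at hn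
    interval_cases n
    · exact hp (by simpa [neg_add_eq_zero] using hnd.symm)
    · exact absurd (by simpa [neg_add_eq_sub] using hnd.symm) (hsub j i)
    · refine absurd ?_ (hsub i j)
      linear_combination (norm := abel_nf) hnd - h3d
  calc 3 * Nat.card ι ≤ 3 * Nat.card (G ⧸ H) := by
        gcongr; exact Nat.card_le_card_of_injective _ hmk
    _ = Nat.card G := by
        rw [H.card_eq_card_quotient_mul_card_addSubgroup, Nat.card_zmultiples, hd, mul_comm]

section DifferenceColoring

variable (A : Type*) [AddCommGroup A]

def signedLabel : A ⊕ A → A := Sum.elim id Neg.neg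

/-- On the edge `inl u — inr v` this is `u - v`. -/
def differenceColoring : Sym2 (A ⊕ A) → A :=
  Sym2.lift ⟨fun x y => signedLabel A x + signedLabel A y, fun _ _ => add_comm _ _⟩

variable {A}

theorem eq_of_signedLabel_eq_of_adj {x y z : A ⊕ A} (hx : (completeBipartiteGraph A A).Adj x z)
    (hy : (completeBipartiteGraph A A).Adj y z) (h : signedLabel A x = signedLabel A y) :
    x = y := by
  rcases x with x | x <;> rcases y with y | y <;> rcases z with z | z <;>
    simp_all [signedLabel]

theorem isProperEdgeColoring_differenceColoring :
    IsProperEdgeColoring (completeBipartiteGraph A A) (differenceColoring A) := by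
  rintro e₁ he₁ e₂ he₂ hne ⟨v, hv₁, hv₂⟩
  obtain ⟨w₁, rfl⟩ := Sym2.mem_iff_exists.mp hv₁
  obtain ⟨w₂, rfl⟩ := Sym2.mem_iff_exists.mp hv₂
  intro hc
  refine hne (congrArg _ (eq_of_signedLabel_eq_of_adj he₁.symm he₂.symm ?_))
  simpa [differenceColoring] using hc

theorem not_hasRainbowCopy_differenceColoring [Module (ZMod 3) A] [Finite A] {m : ℕ}
    (hm : Nat.card A < 3 * m) :
    ¬ HasRainbowCopy (completeBipartiteGraph A A) (differenceColoring A)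
      (completeBipartiteGraph (Fin 2) (Fin m)) := by
  rintro ⟨f, hadj, hrainbow⟩
  set x : Fin 2 → A ⊕ A := fun i => f (.inl i)
  set y : Fin m → A ⊕ A := fun j => f (.inr j)
  have hxy (i j) : (completeBipartiteGraph A A).Adj (x i) (y j) := hadj _ _ (by simp)
  have hx : signedLabel A (x 0) ≠ signedLabel A (x 1) := fun h =>
    have j₀ : Fin m := ⟨0, by omega⟩
    absurd (f.injective (eq_of_signedLabel_eq_of_adj (hxy 0 j₀) (hxy 1 j₀) h)) (by simp)
  have hy : Function.Injective (signedLabel A ∘ y) := fun j k h =>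
    Sum.inr_injective (f.injective (eq_of_signedLabel_eq_of_adj (hxy 0 j).symm (hxy 0 k).symm h))
  have hsub (j k) : signedLabel A (y j) - signedLabel A (y k) ≠
      signedLabel A (x 1) - signedLabel A (x 0) := by
    intro h
    refine hrainbow (.inl 0) (.inr j) (.inl 1) (.inr k) (by simp) (by simp) (by simp) ?_
    simp only [differenceColoring, Sym2.lift_mk]
    linear_combination (norm := abel) h
  have hd : addOrderOf (signedLabel A (x 1) - signedLabel A (x 0)) = 3 :=
    addOrderOf_eq_prime (ZModModule.char_nsmul_eq_zero 3 _) (sub_ne_zero.mpr (Ne.symm hx))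
  have := three_mul_card_le_of_sub_ne hd hy hsub
  rw [Nat.card_fin] at this
  omega

end DifferenceColoring

theorem stmt_16 (r : ℕ) (hr : 1 ≤ r) :
    ∃ c : Sym2 ((Fin r → ZMod 3) ⊕ (Fin r → ZMod 3)) → (Fin r → ZMod 3),
      IsProperEdgeColoring
        (completeBipartiteGraph (Fin r → ZMod 3) (Fin r → ZMod 3)) c ∧
      ¬ HasRainbowCopy
        (completeBipartiteGraph (Fin r → ZMod 3) (Fin r → ZMod 3)) c
        (completeBipartiteGraph (Fin 2) (Fin (3 ^ (r - 1) + 1))) := by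
  refine ⟨differenceColoring _, isProperEdgeColoring_differenceColoring,
    not_hasRainbowCopy_differenceColoring ?_⟩
  calc Nat.card (Fin r → ZMod 3) = 3 ^ (r - 1 + 1) := by simp [Nat.sub_add_cancel hr]
    _ < 3 * (3 ^ (r - 1) + 1) := by rw [pow_succ]; omega
end
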